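/- arXiv:2006.06889 — 10 statements merged into one kernel-verified Lean document; each statement's English description precedes it below -/
import Mathlib

section
/- Let μ_y > 0 and L ∈ ℝ, and define f : ℝ^d × ℝ^d → ℝ by f(x,y) = ⟨x,y⟩ − (μ_y/2)‖y‖² − (1/(2μ_y) − L/2)‖x‖². Then: (i) for every x ∈ ℝ^d, sup_{y∈ℝ^d} f(x,y) = (L/2)‖x‖², i.e. the primal function P(x) := max_y f(x,y) equals (L/2)‖x‖²; (ii) if moreover 1/μ_y − L ≥ μ_y, then the operator F(x,y) = (∇_x f(x,y), −∇_y f(x,y)) = (y − (1/μ_y − L)x, −x + μ_y y) is Lipschitz on ℝ^d × ℝ^d with constant 1 + 1/μ_y − L, where ‖(x,y)‖² = ‖x‖² + ‖y‖². -/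
open scoped RealInnerProductSpace

/-- For `f(x,y) = ⟨x,y⟩ − (μy/2)‖y‖² − (1/(2μy) − L/2)‖x‖²`: (i) `sup_y f(x,y) = (L/2)‖x‖²`;
(ii) if `1/μy − L ≥ μy`, the operator `F(x,y) = (y − (1/μy − L)x, −x + μy y)` is Lipschitz with
constant `1 + 1/μy − L` for the product norm `‖(x,y)‖² = ‖x‖² + ‖y‖²` (stated in squared form). -/
theorem stmt2 {d : ℕ} (μy L : ℝ) (hμy : 0 < μy) :
    (∀ x : EuclideanSpace ℝ (Fin d),
      IsLUB (Set.range fun y : EuclideanSpace ℝ (Fin d) =>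
        ⟪x, y⟫ - μy / 2 * ‖y‖ ^ 2 - (1 / (2 * μy) - L / 2) * ‖x‖ ^ 2)
        (L / 2 * ‖x‖ ^ 2)) ∧
    (μy ≤ 1 / μy - L →
      ∀ x y x' y' : EuclideanSpace ℝ (Fin d),
        ‖(y - (1 / μy - L) • x) - (y' - (1 / μy - L) • x')‖ ^ 2 +
            ‖(-x + μy • y) - (-x' + μy • y')‖ ^ 2 ≤
          (1 + 1 / μy - L) ^ 2 * (‖x - x'‖ ^ 2 + ‖y - y'‖ ^ 2)) := by
  constructor
  · intro x
    constructor
    · rintro v ⟨y, rfl⟩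
      have h1 : ⟪x, y⟫ ≤ ‖x‖ * ‖y‖ := real_inner_le_norm x y
      show ⟪x, y⟫ - μy / 2 * ‖y‖ ^ 2 - (1 / (2 * μy) - L / 2) * ‖x‖ ^ 2 ≤ L / 2 * ‖x‖ ^ 2
      have h2 : ‖x‖ * ‖y‖ ≤ 1 / (2 * μy) * ‖x‖ ^ 2 + μy / 2 * ‖y‖ ^ 2 := by
        have key : 2 * μy * (‖x‖ * ‖y‖) ≤ ‖x‖ ^ 2 + μy ^ 2 * ‖y‖ ^ 2 := by
          nlinarith [sq_nonneg (‖x‖ - μy * ‖y‖)]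
        calc ‖x‖ * ‖y‖ = (2 * μy * (‖x‖ * ‖y‖)) / (2 * μy) := by field_simp
          _ ≤ (‖x‖ ^ 2 + μy ^ 2 * ‖y‖ ^ 2) / (2 * μy) := by gcongr
          _ = 1 / (2 * μy) * ‖x‖ ^ 2 + μy / 2 * ‖y‖ ^ 2 := by field_simp
      linarith
    · intro c hc
      have := hc ⟨μy⁻¹ • x, rfl⟩
      dsimp only at this
      have hi : ⟪x, μy⁻¹ • x⟫ = μy⁻¹ * ‖x‖ ^ 2 := by
        rw [real_inner_smul_right, real_inner_self_eq_norm_sq]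
      have hn : ‖μy⁻¹ • x‖ ^ 2 = μy⁻¹ ^ 2 * ‖x‖ ^ 2 := by
        rw [norm_smul, mul_pow, Real.norm_eq_abs, sq_abs]
      rw [hi, hn] at this
      have key : μy⁻¹ * ‖x‖ ^ 2 - μy / 2 * (μy⁻¹ ^ 2 * ‖x‖ ^ 2) -
          (1 / (2 * μy) - L / 2) * ‖x‖ ^ 2 = L / 2 * ‖x‖ ^ 2 := by
        field_simp
        ring
      linarith [key ▸ this]
  · intro hs x y x' y'
    set s := 1 / μy - L with hsdef
    have hsμ : μy ≤ s := hs
    have h1 : (y - s • x) - (y' - s • x') = (y - y') - s • (x - x') := by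
      rw [smul_sub]; abel
    have h2 : (-x + μy • y) - (-x' + μy • y') = -(x - x') + μy • (y - y') := by
      rw [smul_sub]; abel
    rw [h1, h2]
    set a := x - x'
    set b := y - y'
    have e1 : ‖b - s • a‖ ^ 2 = ‖b‖ ^ 2 - 2 * (s * ⟪b, a⟫) + s ^ 2 * ‖a‖ ^ 2 := by
      rw [norm_sub_sq_real, real_inner_smul_right, norm_smul, Real.norm_eq_abs,
        mul_pow, sq_abs]
    have e2 : ‖-a + μy • b‖ ^ 2 = ‖a‖ ^ 2 - 2 * (μy * ⟪b, a⟫) + μy ^ 2 * ‖b‖ ^ 2 := by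
      rw [norm_add_sq_real, real_inner_smul_right, norm_neg, norm_smul,
        Real.norm_eq_abs, mul_pow, sq_abs, inner_neg_left, real_inner_comm]
      ring
    rw [e1, e2]
    have hcs : -⟪b, a⟫ ≤ ‖b‖ * ‖a‖ := by
      have := real_inner_le_norm (-b) a
      rwa [inner_neg_left, norm_neg] at this
    have hs0 : 0 < s := lt_of_lt_of_le hμy hsμ
    have hrw : 1 + 1 / μy - L = 1 + s := by rw [hsdef]; ring
    rw [hrw]
    have hμs2 : μy ^ 2 ≤ s ^ 2 := by nlinarith
    nlinarith [mul_le_mul_of_nonneg_left hcs (by positivity : (0:ℝ) ≤ 2 * (s + μy)),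
      sq_nonneg (‖a‖ - ‖b‖), sq_nonneg ‖a‖, sq_nonneg ‖b‖, hμy.le, hs0.le]
end

section
/- Let Z ⊆ ℝ^n be a nonempty closed convex set, z₀ ∈ Z, and ζ₁, ζ₂ ∈ ℝ^n. Let w₁ = Π_{z₀}(ζ₁) and w₂ = Π_{z₀}(ζ₂). Then for every z ∈ Z: ⟨ζ₂, w₁ − z⟩ ≤ (1/2)‖z − z₀‖² − (1/2)‖w₂ − z‖² − (1/2)‖w₁ − z₀‖² − (1/2)‖w₁ − w₂‖² + ‖ζ₁ − ζ₂‖². -/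
open scoped RealInnerProductSpace

/-- Variational inequality from the prox optimality property. -/
lemma prox_vi {n : ℕ} {Z : Set (EuclideanSpace ℝ (Fin n))} (hZcv : Convex ℝ Z)
    (z₀ w ζ : EuclideanSpace ℝ (Fin n)) (hwmem : w ∈ Z)
    (hw : ∀ z ∈ Z, ⟪ζ, w⟫ + 1 / 2 * ‖w - z₀‖ ^ 2 ≤ ⟪ζ, z⟫ + 1 / 2 * ‖z - z₀‖ ^ 2) :
    ∀ z ∈ Z, 0 ≤ ⟪ζ, z - w⟫ + ⟪w - z₀, z - w⟫ := by
  intro z hz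
  set a : ℝ := ⟪ζ, z - w⟫ + ⟪w - z₀, z - w⟫ with ha
  by_contra hcon
  push_neg at hcon
  set c : ℝ := (1:ℝ)/2 * ‖z - w‖ ^ 2 with hc
  have hc0 : 0 ≤ c := by positivity
  have key : ∀ t : ℝ, 0 ≤ t → t ≤ 1 → 0 ≤ t * a + t ^ 2 * c := by
    intro t ht0 ht1
    have hmem : w + t • (z - w) ∈ Z := by
      have := hZcv hwmem hz (by linarith : (0:ℝ) ≤ 1 - t) ht0 (by ring)
      convert this using 1
      module
    have h := hw _ hmem
    have hnorm : ‖w + t • (z - w) - z₀‖ ^ 2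
        = ‖w - z₀‖ ^ 2 + 2 * t * ⟪w - z₀, z - w⟫ + t ^ 2 * ‖z - w‖ ^ 2 := by
      have h1 : w + t • (z - w) - z₀ = (w - z₀) + t • (z - w) := by module
      rw [h1, norm_add_sq_real, real_inner_smul_right, norm_smul]
      simp [mul_pow, abs_of_nonneg ht0]
      ring
    have hinner : ⟪ζ, w + t • (z - w)⟫ = ⟪ζ, w⟫ + t * ⟪ζ, z - w⟫ := by
      rw [inner_add_right, real_inner_smul_right]
    rw [hinner, hnorm] at h
    simp only [ha, hc]
    nlinarith [h]
  have hcpos : 0 < c := by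
    rcases hc0.lt_or_eq with h | h
    · exact h
    · exfalso
      have ht := key 1 zero_le_one le_rfl
      nlinarith
  rcases le_or_gt (-a / (2 * c)) 1 with h1 | h1
  · have htpos : 0 < -a / (2 * c) := div_pos (by linarith) (by linarith)
    have ht := key (-a / (2 * c)) htpos.le h1
    have heq : -a / (2 * c) * c = -a / 2 := by field_simp
    nlinarith [mul_pos htpos (show (0:ℝ) < -a/2 by linarith)]
  · have ht := key 1 zero_le_one le_rfl
    rw [lt_div_iff₀ (by linarith : (0:ℝ) < 2 * c)] at h1
    nlinarith

/-- Lemma 3.1 of Nemirovski (2004): for prox steps `w₁ = Π_{z₀}(ζ₁)`, `w₂ = Π_{z₀}(ζ₂)` on a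
nonempty closed convex set `Z`, for every `z ∈ Z`,
`⟨ζ₂, w₁ − z⟩ ≤ ½‖z − z₀‖² − ½‖w₂ − z‖² − ½‖w₁ − z₀‖² − ½‖w₁ − w₂‖² + ‖ζ₁ − ζ₂‖²`. -/
theorem stmt4 {n : ℕ} (Z : Set (EuclideanSpace ℝ (Fin n)))
    (hZne : Z.Nonempty) (hZcl : IsClosed Z) (hZcv : Convex ℝ Z)
    (z₀ w₁ w₂ ζ₁ ζ₂ : EuclideanSpace ℝ (Fin n)) (hz₀ : z₀ ∈ Z)
    (hw₁mem : w₁ ∈ Z)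
    (hw₁ : ∀ z ∈ Z, ⟪ζ₁, w₁⟫ + 1 / 2 * ‖w₁ - z₀‖ ^ 2 ≤ ⟪ζ₁, z⟫ + 1 / 2 * ‖z - z₀‖ ^ 2)
    (hw₂mem : w₂ ∈ Z)
    (hw₂ : ∀ z ∈ Z, ⟪ζ₂, w₂⟫ + 1 / 2 * ‖w₂ - z₀‖ ^ 2 ≤ ⟪ζ₂, z⟫ + 1 / 2 * ‖z - z₀‖ ^ 2) :
    ∀ z ∈ Z, ⟪ζ₂, w₁ - z⟫ ≤
      1 / 2 * ‖z - z₀‖ ^ 2 - 1 / 2 * ‖w₂ - z‖ ^ 2 - 1 / 2 * ‖w₁ - z₀‖ ^ 2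
        - 1 / 2 * ‖w₁ - w₂‖ ^ 2 + ‖ζ₁ - ζ₂‖ ^ 2 := by
  intro z hz
  have h1 := prox_vi hZcv z₀ w₁ ζ₁ hw₁mem hw₁ w₂ hw₂mem
  have h2 := prox_vi hZcv z₀ w₂ ζ₂ hw₂mem hw₂ z hz
  have h3 := prox_vi hZcv z₀ w₂ ζ₂ hw₂mem hw₂ w₁ hw₁mem
  -- nonexpansiveness: ‖w₂ - w₁‖² ≤ ⟪ζ₁ - ζ₂, w₂ - w₁⟫
  have hmono : ‖w₂ - w₁‖ ^ 2 ≤ ⟪ζ₁ - ζ₂, w₂ - w₁⟫ := by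
    have e : ⟪ζ₁ - ζ₂, w₂ - w₁⟫ = ⟪ζ₁, w₂ - w₁⟫ + ⟪ζ₂, w₁ - w₂⟫ := by
      rw [inner_sub_left]; rw [show w₁ - w₂ = -(w₂ - w₁) by abel, inner_neg_right]; ring
    have e2 : ⟪w₁ - z₀, w₂ - w₁⟫ + ⟪w₂ - z₀, w₁ - w₂⟫ = -‖w₂ - w₁‖ ^ 2 := by
      rw [show w₁ - w₂ = -(w₂ - w₁) by abel, inner_neg_right, ← sub_eq_add_neg,
        ← inner_sub_left, show w₁ - z₀ - (w₂ - z₀) = -(w₂ - w₁) by abel, inner_neg_left,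
        real_inner_self_eq_norm_sq]
    linarith [h1, h3, e.ge, e2.le, e.le, e2.ge]
  have hCS : ⟪ζ₁ - ζ₂, w₂ - w₁⟫ ≤ ‖ζ₁ - ζ₂‖ * ‖w₂ - w₁‖ := real_inner_le_norm _ _
  have hkey : ⟪ζ₁ - ζ₂, w₂ - w₁⟫ ≤ ‖ζ₁ - ζ₂‖ ^ 2 := by
    nlinarith [sq_nonneg (‖ζ₁ - ζ₂‖ - ‖w₂ - w₁‖), norm_nonneg (w₂ - w₁), norm_nonneg (ζ₁ - ζ₂)]
  have hsym : ‖w₂ - w₁‖ ^ 2 = ‖w₁ - w₂‖ ^ 2 := by rw [norm_sub_rev]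
  simp only [norm_sub_sq_real, inner_sub_left, inner_sub_right,
    real_inner_self_eq_norm_sq] at h1 h2 h3 hkey hsym hmono ⊢
  linarith [real_inner_comm w₂ z₀, real_inner_comm w₁ w₂, real_inner_comm z z₀,
    real_inner_comm w₁ z₀, real_inner_comm w₂ z, real_inner_comm ζ₁ ζ₂]
end

section
/- Let Z ⊆ ℝ^n be a nonempty closed convex set, v₀ ∈ Z, and ζ₁, ..., ζ_T ∈ ℝ^n. Define v_t = Π_{v_{t−1}}(ζ_t) for t = 1, ..., T. Then for every u ∈ Z: Σ_{t=1}^{T} ⟨ζ_t, v_{t−1} − u⟩ ≤ (1/2)‖v₀ − u‖² + (1/2) Σ_{t=1}^{T} ‖ζ_t‖². -/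
open scoped RealInnerProductSpace

section aux
variable {E : Type*} [NormedAddCommGroup E] [InnerProductSpace ℝ E]

lemma aux_var {Z : Set E} (hZcv : Convex ℝ Z) {p q u : E} {ζ : E}
    (hq : q ∈ Z) (hu : u ∈ Z)
    (h : ∀ z ∈ Z, ⟪ζ, q⟫ + 1 / 2 * ‖q - p‖ ^ 2 ≤ ⟪ζ, z⟫ + 1 / 2 * ‖z - p‖ ^ 2) :
    0 ≤ ⟪ζ + (q - p), u - q⟫ := by
  set a : ℝ := ⟪ζ + (q - p), u - q⟫ with ha
  set c : ℝ := ‖u - q‖ ^ 2 with hc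
  have key : ∀ s : ℝ, 0 < s → s ≤ 1 → 0 ≤ a + s / 2 * c := by
    intro s hs hs1
    have hz : q + s • (u - q) ∈ Z := by
      have := hZcv hq hu (by linarith : (0:ℝ) ≤ 1 - s) hs.le (by ring)
      convert this using 1
      module
    have h2 := h _ hz
    have hexp : ‖q + s • (u - q) - p‖ ^ 2
        = ‖q - p‖ ^ 2 + 2 * (s * ⟪q - p, u - q⟫) + s ^ 2 * ‖u - q‖ ^ 2 := by
      have : q + s • (u - q) - p = (q - p) + s • (u - q) := by abel
      rw [this, norm_add_sq_real, real_inner_smul_right, norm_smul]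
      simp [mul_pow, abs_of_pos hs]
      try ring
    have hin : ⟪ζ, q + s • (u - q)⟫ = ⟪ζ, q⟫ + s * ⟪ζ, u - q⟫ := by
      rw [inner_add_right, real_inner_smul_right]
    rw [hin, hexp] at h2
    have h3 : 0 ≤ s * (⟪ζ, u - q⟫ + ⟪q - p, u - q⟫) + s ^ 2 / 2 * c := by nlinarith
    have h4 : 0 ≤ s * (a + s / 2 * c) := by
      have : a = ⟪ζ, u - q⟫ + ⟪q - p, u - q⟫ := by rw [ha, inner_add_left]
      nlinarith
    nlinarith
  by_contra hneg
  push_neg at hneg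
  have hc0 : 0 ≤ c := by positivity
  rcases eq_or_lt_of_le hc0 with hc0' | hc0'
  · have := key 1 one_pos le_rfl
    nlinarith
  · have hspos : 0 < min 1 (-a / c) := by
      apply lt_min one_pos
      exact div_pos (by linarith) hc0'
    have := key _ hspos (min_le_left _ _)
    have hle : min 1 (-a / c) ≤ -a / c := min_le_right _ _
    nlinarith [mul_le_mul_of_nonneg_right hle hc0,
      (div_mul_cancel₀ (-a) (ne_of_gt hc0'))]

lemma aux_step {Z : Set E} (hZcv : Convex ℝ Z) {p q u : E} {ζ : E}
    (hq : q ∈ Z) (hu : u ∈ Z)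
    (h : ∀ z ∈ Z, ⟪ζ, q⟫ + 1 / 2 * ‖q - p‖ ^ 2 ≤ ⟪ζ, z⟫ + 1 / 2 * ‖z - p‖ ^ 2) :
    ⟪ζ, p - u⟫ ≤ 1 / 2 * ‖p - u‖ ^ 2 - 1 / 2 * ‖q - u‖ ^ 2 + 1 / 2 * ‖ζ‖ ^ 2 := by
  have hvar := aux_var hZcv hq hu h
  rw [inner_add_left] at hvar
  have hid : ‖u - p‖ ^ 2 = ‖u - q‖ ^ 2 + 2 * ⟪u - q, q - p⟫ + ‖q - p‖ ^ 2 := by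
    have : u - p = (u - q) + (q - p) := by abel
    rw [this, norm_add_sq_real]
  have hsplit : ⟪ζ, p - u⟫ = ⟪ζ, p - q⟫ + ⟪ζ, q - u⟫ := by
    rw [← inner_add_right]; congr 1; abel
  have hcs : ⟪ζ, p - q⟫ ≤ 1 / 2 * ‖ζ‖ ^ 2 + 1 / 2 * ‖p - q‖ ^ 2 := by
    have := norm_sub_sq_real ζ (p - q)
    nlinarith [sq_nonneg ‖ζ - (p - q)‖]
  have e1 : ‖p - q‖ = ‖q - p‖ := norm_sub_rev _ _
  have e2 : ‖u - p‖ = ‖p - u‖ := norm_sub_rev _ _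
  have e3 : ‖u - q‖ = ‖q - u‖ := norm_sub_rev _ _
  have e4 : ⟪ζ, q - u⟫ = - ⟪ζ, u - q⟫ := by
    rw [← inner_neg_right]; congr 1; abel
  have e5 : ⟪q - p, u - q⟫ = ⟪u - q, q - p⟫ := real_inner_comm _ _
  have e1' : ‖p - q‖ ^ 2 = ‖q - p‖ ^ 2 := by rw [e1]
  have e2' : ‖u - p‖ ^ 2 = ‖p - u‖ ^ 2 := by rw [e2]
  have e3' : ‖u - q‖ ^ 2 = ‖q - u‖ ^ 2 := by rw [e3]
  linarith

end aux

/-- Corollary 2 of Juditsky et al. (2011): for the prox recursion `v_t = Π_{v_{t−1}}(ζ_t)` on a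
nonempty closed convex set `Z`, for every `u ∈ Z`,
`Σ_{t=1}^T ⟨ζ_t, v_{t−1} − u⟩ ≤ ½‖v₀ − u‖² + ½ Σ_{t=1}^T ‖ζ_t‖²`. -/
theorem stmt5 {n : ℕ} (Z : Set (EuclideanSpace ℝ (Fin n)))
    (hZne : Z.Nonempty) (hZcl : IsClosed Z) (hZcv : Convex ℝ Z)
    (T : ℕ) (ζ v : ℕ → EuclideanSpace ℝ (Fin n))
    (hv0 : v 0 ∈ Z)
    (hv : ∀ t ∈ Finset.Icc 1 T, v t ∈ Z ∧ ∀ z ∈ Z,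
      ⟪ζ t, v t⟫ + 1 / 2 * ‖v t - v (t - 1)‖ ^ 2 ≤
        ⟪ζ t, z⟫ + 1 / 2 * ‖z - v (t - 1)‖ ^ 2) :
    ∀ u ∈ Z, ∑ t ∈ Finset.Icc 1 T, ⟪ζ t, v (t - 1) - u⟫ ≤
      1 / 2 * ‖v 0 - u‖ ^ 2 + 1 / 2 * ∑ t ∈ Finset.Icc 1 T, ‖ζ t‖ ^ 2 := by
  intro u hu
  have main : ∀ S : ℕ, S ≤ T →
      ∑ t ∈ Finset.Icc 1 S, ⟪ζ t, v (t - 1) - u⟫ ≤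
        1 / 2 * ‖v 0 - u‖ ^ 2 - 1 / 2 * ‖v S - u‖ ^ 2
          + 1 / 2 * ∑ t ∈ Finset.Icc 1 S, ‖ζ t‖ ^ 2 := by
    intro S
    induction S with
    | zero => simp
    | succ S ih =>
      intro hST
      have hS : S ≤ T := Nat.le_of_succ_le hST
      have ih' := ih hS
      have hmem : S + 1 ∈ Finset.Icc 1 T := by
        simp [Nat.succ_le_iff]; omega
      obtain ⟨hqZ, hopt⟩ := hv (S + 1) hmem
      have hstep := aux_step hZcv hqZ hu hopt
      rw [Finset.sum_Icc_succ_top (by omega : 1 ≤ S + 1),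
          Finset.sum_Icc_succ_top (by omega : 1 ≤ S + 1)]
      simp only [Nat.add_sub_cancel] at hstep ⊢
      linarith
  have hpos : (0:ℝ) ≤ ‖v T - u‖ ^ 2 := by positivity
  linarith [main T le_rfl]
end

section
/- Let X ⊆ ℝ^d and Y ⊆ ℝ^{d'} be nonempty compact convex sets and let h : X × Y → ℝ be continuous, λ₁-strongly convex in x for each fixed y ∈ Y, and λ₂-strongly concave in y for each fixed x ∈ X (with λ₁, λ₂ > 0). Let x̂(y) = argmin_{x'∈X} h(x', y) and ŷ(x) = argmax_{y'∈Y} h(x, y'). Then for any two pairs (x₀, y₀), (x₁, y₁) ∈ X × Y: (λ₁/4)‖x̂(y₁) − x₀‖² + (λ₂/4)‖ŷ(x₁) − y₀‖² ≤ [max_{y'∈Y} h(x₀, y') − min_{x'∈X} h(x', y₀)] + [max_{y'∈Y} h(x₁, y') − min_{x'∈X} h(x', y₁)]. -/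
/-!
Compare the minimizer `x̂(y₁)` with `x₀` through the midpoint: strong convexity at
`½ x̂(y₁) + ½ x₀` together with minimality of `x̂(y₁)` gives
`λ₁/4 ‖x̂(y₁) - x₀‖² ≤ h(x₀, y₁) - h(x̂(y₁), y₁)`, and symmetrically
`λ₂/4 ‖ŷ(x₁) - y₀‖² ≤ h(x₁, ŷ(x₁)) - h(x₁, y₀)`. The two cross terms are absorbed by the gaps,
since `h(x₀, y₁) ≤ h(x₀, ŷ(x₀))` and `h(x̂(y₀), y₀) ≤ h(x₁, y₀)`.
-/

variable {E : Type*} [NormedAddCommGroup E] [NormedSpace ℝ E] {s : Set E} {m : ℝ} {f : E → ℝ}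
  {a x : E}

lemma StrongConvexOn.mul_sq_norm_sub_le_of_isMinOn (hf : StrongConvexOn s m f) (ha : a ∈ s)
    (hx : x ∈ s) (hmin : IsMinOn f s a) :
    m / 4 * ‖a - x‖ ^ 2 ≤ f x - f a := by
  have hhalf : (0 : ℝ) ≤ 1 / 2 := by norm_num
  have hmid := hf.2 ha hx hhalf hhalf (by norm_num)
  have hle : f a ≤ f ((1 / 2 : ℝ) • a + (1 / 2 : ℝ) • x) :=
    hmin (hf.1 ha hx hhalf hhalf (by norm_num))
  simp only [smul_eq_mul] at hmid
  linarith

lemma StrongConcaveOn.mul_sq_norm_sub_le_of_isMaxOn (hf : StrongConcaveOn s m f) (ha : a ∈ s)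
    (hx : x ∈ s) (hmax : IsMaxOn f s a) :
    m / 4 * ‖a - x‖ ^ 2 ≤ f a - f x := by
  simpa [sub_eq_neg_add, add_comm] using
    StrongConvexOn.mul_sq_norm_sub_le_of_isMinOn (UniformConcaveOn.neg hf) ha hx hmax.neg

theorem stmt6_general {d d' : ℕ}
    (X : Set (EuclideanSpace ℝ (Fin d))) (Y : Set (EuclideanSpace ℝ (Fin d')))
    (h : EuclideanSpace ℝ (Fin d) → EuclideanSpace ℝ (Fin d') → ℝ)
    (lam₁ lam₂ : ℝ)
    (hscx : ∀ y ∈ Y, ConvexOn ℝ X (fun x => h x y - lam₁ / 2 * ‖x‖ ^ 2))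
    (hscy : ∀ x ∈ X, ConcaveOn ℝ Y (fun y => h x y + lam₂ / 2 * ‖y‖ ^ 2))
    (xhat : EuclideanSpace ℝ (Fin d') → EuclideanSpace ℝ (Fin d))
    (yhat : EuclideanSpace ℝ (Fin d) → EuclideanSpace ℝ (Fin d'))
    (hxhat : ∀ y ∈ Y, xhat y ∈ X ∧ ∀ x ∈ X, h (xhat y) y ≤ h x y)
    (hyhat : ∀ x ∈ X, yhat x ∈ Y ∧ ∀ y ∈ Y, h x y ≤ h x (yhat x))
    (x₀ x₁ : EuclideanSpace ℝ (Fin d)) (y₀ y₁ : EuclideanSpace ℝ (Fin d'))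
    (hx₀ : x₀ ∈ X) (hx₁ : x₁ ∈ X) (hy₀ : y₀ ∈ Y) (hy₁ : y₁ ∈ Y) :
    lam₁ / 4 * ‖xhat y₁ - x₀‖ ^ 2 + lam₂ / 4 * ‖yhat x₁ - y₀‖ ^ 2 ≤
      (h x₀ (yhat x₀) - h (xhat y₀) y₀) + (h x₁ (yhat x₁) - h (xhat y₁) y₁) := by
  obtain ⟨hxhat₁X, hxhat₁min⟩ := hxhat y₁ hy₁
  obtain ⟨hyhat₁Y, hyhat₁max⟩ := hyhat x₁ hx₁
  have dist_xhat : lam₁ / 4 * ‖xhat y₁ - x₀‖ ^ 2 ≤ h x₀ y₁ - h (xhat y₁) y₁ :=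
    (strongConvexOn_iff_convex.2 (hscx y₁ hy₁)).mul_sq_norm_sub_le_of_isMinOn
      hxhat₁X hx₀ hxhat₁min
  have dist_yhat : lam₂ / 4 * ‖yhat x₁ - y₀‖ ^ 2 ≤ h x₁ (yhat x₁) - h x₁ y₀ :=
    (strongConcaveOn_iff_convex.2 (hscy x₁ hx₁)).mul_sq_norm_sub_le_of_isMaxOn
      hyhat₁Y hy₀ hyhat₁max
  have cross_y : h x₀ y₁ ≤ h x₀ (yhat x₀) := (hyhat x₀ hx₀).2 y₁ hy₁
  have cross_x : h (xhat y₀) y₀ ≤ h x₁ y₀ := (hxhat y₀ hy₀).2 x₁ hx₁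
  linarith

/-- Lemma 1 of Yan et al. (2020): for `h` λ₁-strongly convex in `x` and λ₂-strongly concave in
`y` on compact convex sets, the distances from `x₀, y₀` to the optimizers `x̂(y₁), ŷ(x₁)` are
controlled by the sum of the duality gaps of `(x₀,y₀)` and `(x₁,y₁)`. -/
theorem stmt6 {d d' : ℕ}
    (X : Set (EuclideanSpace ℝ (Fin d))) (Y : Set (EuclideanSpace ℝ (Fin d')))
    (hXne : X.Nonempty) (hXcp : IsCompact X) (hXcv : Convex ℝ X)
    (hYne : Y.Nonempty) (hYcp : IsCompact Y) (hYcv : Convex ℝ Y)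
    (h : EuclideanSpace ℝ (Fin d) → EuclideanSpace ℝ (Fin d') → ℝ)
    (lam₁ lam₂ : ℝ) (hlam₁ : 0 < lam₁) (hlam₂ : 0 < lam₂)
    (hcont : Continuous fun p : EuclideanSpace ℝ (Fin d) × EuclideanSpace ℝ (Fin d') =>
      h p.1 p.2)
    (hscx : ∀ y ∈ Y, ConvexOn ℝ X (fun x => h x y - lam₁ / 2 * ‖x‖ ^ 2))
    (hscy : ∀ x ∈ X, ConcaveOn ℝ Y (fun y => h x y + lam₂ / 2 * ‖y‖ ^ 2))
    (xhat : EuclideanSpace ℝ (Fin d') → EuclideanSpace ℝ (Fin d))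
    (yhat : EuclideanSpace ℝ (Fin d) → EuclideanSpace ℝ (Fin d'))
    (hxhat : ∀ y ∈ Y, xhat y ∈ X ∧ ∀ x ∈ X, h (xhat y) y ≤ h x y)
    (hyhat : ∀ x ∈ X, yhat x ∈ Y ∧ ∀ y ∈ Y, h x y ≤ h x (yhat x))
    (x₀ x₁ : EuclideanSpace ℝ (Fin d)) (y₀ y₁ : EuclideanSpace ℝ (Fin d'))
    (hx₀ : x₀ ∈ X) (hx₁ : x₁ ∈ X) (hy₀ : y₀ ∈ Y) (hy₁ : y₁ ∈ Y) :
    lam₁ / 4 * ‖xhat y₁ - x₀‖ ^ 2 + lam₂ / 4 * ‖yhat x₁ - y₀‖ ^ 2 ≤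
      (h x₀ (yhat x₀) - h (xhat y₀) y₀) + (h x₁ (yhat x₁) - h (xhat y₁) y₁) :=
  stmt6_general X Y h lam₁ lam₂ hscx hscy xhat yhat hxhat hyhat x₀ x₁ y₀ y₁ hx₀ hx₁ hy₀ hy₁
end

section
/- Let Y ⊆ ℝ^{d'} be a nonempty closed convex set and let f : ℝ^d × Y → ℝ be differentiable with F(x,y) = (∇_x f(x,y), −∇_y f(x,y)) being ℓ-Lipschitz, ρ-weakly convex in x for every y (ρ > 0), and μ_y-strongly concave in y for every x (μ_y > 0). Let P(x) = max_{y∈Y} f(x,y). Fix x₀ ∈ ℝ^d, y₀ ∈ Y, and a pair (x₁, y₁) ∈ ℝ^d × Y. Define f₁(x,y) = f(x,y) + ρ‖x − x₀‖² and f₂(x,y) = f(x,y) + ρ‖x − x₁‖², with duality gaps Gap_i(x,y) = max_{y'∈Y} f_i(x, y') − min_{x'∈ℝ^d} f_i(x', y) for i = 1, 2. Then Gap₁(x₁, y₁) ≥ (3/50)·Gap₂(x₁, y₁) + (4/5)·(P(x₁) − P(x₀)). -/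
/-!
For fixed `y₁`, `h(x) = f(x, y₁) + ρ‖x − x₀‖²` is `ρ`-strongly convex by weak convexity, so it
grows at least like `(ρ/4)‖x − x̂‖²` away from its minimiser `x̂`, whose value is `min f₁(·, y₁)`.
Evaluating this growth at `x₀`, at `x₁` and at the minimiser of the `x₁`-centred problem, and using
`f(·, y₁) ≤ P`, `max f₁(x₁, ·) = P(x₁) + ρ‖x₁ − x₀‖²` and `max f₂(x₁, ·) = P(x₁)`, the claim
reduces to the nonnegativity of a quadratic form in `‖x₁ − x₀‖`, `‖x̂ − x₀‖` and `‖x₁ − x̂‖`.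
-/

open scoped RealInnerProductSpace
open Set

lemma IsGreatest.image_add_const {α β : Type*} [Add β] [Preorder β] [AddRightMono β]
    {g : α → β} {s : Set α} {a : β} (h : IsGreatest (g '' s) a) (c : β) :
    IsGreatest ((fun y => g y + c) '' s) (a + c) := by
  simpa only [image_image, id] using (monotone_id.add_const c).map_isGreatest h

section InnerProductSpace

variable {E : Type*} [NormedAddCommGroup E] [InnerProductSpace ℝ E]

lemma StrongConvexOn.quadratic_growth_of_isMinOn {s : Set E} {m : ℝ} {h : E → ℝ} {x xm : E}
    (hh : StrongConvexOn s m h) (hx : x ∈ s) (hxm : xm ∈ s) (hmin : IsMinOn h s xm) :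
    h xm + m / 4 * ‖x - xm‖ ^ 2 ≤ h x := by
  have half : (0 : ℝ) ≤ 1 / 2 := by norm_num
  have hmid := hh.2 hx hxm half half (add_halves 1)
  have hle : h xm ≤ h ((1 / 2 : ℝ) • x + (1 / 2 : ℝ) • xm) :=
    hmin (hh.1 hx hxm half half (add_halves 1))
  simp only [smul_eq_mul] at hmid
  linarith

lemma strongConvexOn_add_mul_norm_sub_sq {g : E → ℝ} {ρ : ℝ}
    (hg : ConvexOn ℝ univ fun x => g x + ρ / 2 * ‖x‖ ^ 2) (x₀ : E) :
    StrongConvexOn univ ρ fun x => g x + ρ * ‖x - x₀‖ ^ 2 := by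
  rw [strongConvexOn_iff_convex]
  have hlin : ConvexOn ℝ univ fun x => (-(2 * ρ)) • (innerSL ℝ x₀) x + ρ * ‖x₀‖ ^ 2 :=
    (((-(2 * ρ)) • (innerSL ℝ x₀)).toLinearMap.convexOn convex_univ).add_const _
  refine (hg.add hlin).congr fun x _ => ?_
  simp only [Pi.add_apply, innerSL_apply_apply, smul_eq_mul, norm_sub_sq_real, real_inner_comm x₀ x]
  ring

lemma norm_sq_sub_norm_sub_sq_le (a u w : E) :
    ‖a‖ ^ 2 - ‖a - w‖ ^ 2 ≤ 1 / 4 * ‖a - u‖ ^ 2 + 3 * ‖w‖ ^ 2 + 2 * (‖u‖ * ‖w‖) := by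
  have hu : ⟪a, u⟫ ≤ ‖a‖ * ‖u‖ := real_inner_le_norm a u
  have hw : ⟪a, w⟫ ≤ ‖a‖ * ‖w‖ := real_inner_le_norm a w
  rw [norm_sub_sq_real a u, norm_sub_sq_real a w]
  nlinarith [sq_nonneg (‖a‖ - ‖u‖ - 4 * ‖w‖)]

theorem proximal_gap_bound {g : E → ℝ} {ρ : ℝ} (hρ : 0 < ρ)
    (hg : ConvexOn ℝ univ fun x => g x + ρ / 2 * ‖x‖ ^ 2) {x₀ x₁ : E} {p₀ p₁ m₁ m₂ : ℝ}
    (hp₀ : g x₀ ≤ p₀) (hp₁ : g x₁ ≤ p₁)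
    (hm₁ : IsLeast (range fun x => g x + ρ * ‖x - x₀‖ ^ 2) m₁)
    (hm₂ : m₂ ∈ range fun x => g x + ρ * ‖x - x₁‖ ^ 2) :
    3 / 50 * (p₁ - m₂) + 4 / 5 * (p₁ - p₀) ≤ p₁ + ρ * ‖x₁ - x₀‖ ^ 2 - m₁ := by
  obtain ⟨xm, hxm⟩ := hm₁.1
  obtain ⟨z, rfl⟩ := hm₂
  have growth (x : E) : m₁ + ρ / 4 * ‖x - xm‖ ^ 2 ≤ g x + ρ * ‖x - x₀‖ ^ 2 := by
    rw [← hxm]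
    exact (strongConvexOn_add_mul_norm_sub_sq hg x₀).quadratic_growth_of_isMinOn
      (mem_univ x) (mem_univ xm) fun x _ => hxm ▸ hm₁.2 ⟨x, rfl⟩
  set D := ‖x₁ - x₀‖
  set s := ‖xm - x₀‖
  set t := ‖x₁ - xm‖
  have at_x₀ : m₁ + ρ / 4 * s ^ 2 ≤ p₀ := by
    have := growth x₀
    rw [sub_self, norm_zero, norm_sub_rev] at this
    linarith
  have at_x₁ : m₁ + ρ / 4 * t ^ 2 ≤ p₁ + ρ * D ^ 2 := by
    linarith [growth x₁]
  have at_z : m₁ - 3 * ρ * D ^ 2 - 2 * ρ * (s * D) ≤ g z + ρ * ‖z - x₁‖ ^ 2 := by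
    have hq := norm_sq_sub_norm_sub_sq_le (z - x₀) (xm - x₀) (x₁ - x₀)
    rw [sub_sub_sub_cancel_right, sub_sub_sub_cancel_right] at hq
    nlinarith [growth z, mul_le_mul_of_nonneg_left hq hρ.le]
  -- The goal is `4/5 · at_x₀ + 7/50 · at_x₁ + 3/50 · at_z` plus this residual form.
  have hquad : 0 ≤ ρ * (17 / 25 * D ^ 2 - 3 / 25 * (s * D) + 1 / 5 * s ^ 2 + 7 / 200 * t ^ 2) :=
    mul_nonneg hρ.le (by nlinarith [sq_nonneg (s - 3 / 10 * D), sq_nonneg D, sq_nonneg t])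
  linarith

end InnerProductSpace

theorem stmt7_general {d d' : ℕ}
    (Y : Set (EuclideanSpace ℝ (Fin d')))
    (f : EuclideanSpace ℝ (Fin d) → EuclideanSpace ℝ (Fin d') → ℝ)
    (ρ : ℝ) (hρ : 0 < ρ)
    (hwc : ∀ y ∈ Y, ConvexOn ℝ Set.univ fun x : EuclideanSpace ℝ (Fin d) =>
      f x y + ρ / 2 * ‖x‖ ^ 2)
    (P : EuclideanSpace ℝ (Fin d) → ℝ)
    (hP : ∀ x, IsGreatest ((fun y => f x y) '' Y) (P x))
    (x₀ x₁ : EuclideanSpace ℝ (Fin d)) (y₁ : EuclideanSpace ℝ (Fin d'))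
    (hy₁ : y₁ ∈ Y)
    (M₁ m₁ M₂ m₂ : ℝ)
    (hM₁ : IsGreatest ((fun y => f x₁ y + ρ * ‖x₁ - x₀‖ ^ 2) '' Y) M₁)
    (hm₁ : IsLeast (Set.range fun x => f x y₁ + ρ * ‖x - x₀‖ ^ 2) m₁)
    (hM₂ : IsGreatest ((fun y => f x₁ y + ρ * ‖x₁ - x₁‖ ^ 2) '' Y) M₂)
    (hm₂ : IsLeast (Set.range fun x => f x y₁ + ρ * ‖x - x₁‖ ^ 2) m₂) :
    M₁ - m₁ ≥ 3 / 50 * (M₂ - m₂) + 4 / 5 * (P x₁ - P x₀) := by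
  have hM₁_eq : M₁ = P x₁ + ρ * ‖x₁ - x₀‖ ^ 2 := hM₁.unique ((hP x₁).image_add_const _)
  have hM₂_eq : M₂ = P x₁ := by
    simpa using hM₂.unique ((hP x₁).image_add_const (ρ * ‖x₁ - x₁‖ ^ 2))
  have hbound := proximal_gap_bound hρ (hwc y₁ hy₁) ((hP x₀).2 ⟨y₁, hy₁, rfl⟩)
    ((hP x₁).2 ⟨y₁, hy₁, rfl⟩) hm₁ hm₂.1
  rw [hM₁_eq, hM₂_eq]
  linarith

/-- Lemma 5 of Yan et al. (2020): with `f₁(x,y) = f(x,y) + ρ‖x − x₀‖²` and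
`f₂(x,y) = f(x,y) + ρ‖x − x₁‖²`, the duality gaps satisfy
`Gap₁(x₁,y₁) ≥ (3/50)·Gap₂(x₁,y₁) + (4/5)·(P(x₁) − P(x₀))`. -/
theorem stmt7 {d d' : ℕ}
    (Y : Set (EuclideanSpace ℝ (Fin d')))
    (hYne : Y.Nonempty) (hYcl : IsClosed Y) (hYcv : Convex ℝ Y)
    (f : EuclideanSpace ℝ (Fin d) → EuclideanSpace ℝ (Fin d') → ℝ)
    (ℓ ρ μy : ℝ) (hℓ : 0 < ℓ) (hρ : 0 < ρ) (hμy : 0 < μy)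
    (hdiff : Differentiable ℝ fun p : EuclideanSpace ℝ (Fin d) × EuclideanSpace ℝ (Fin d') =>
      f p.1 p.2)
    (hFLip : ∀ (x x' : EuclideanSpace ℝ (Fin d)), ∀ y ∈ Y, ∀ y' ∈ Y,
      ‖gradient (fun u => f u y) x - gradient (fun u => f u y') x'‖ ^ 2 +
          ‖gradient (f x) y - gradient (f x') y'‖ ^ 2 ≤
        ℓ ^ 2 * (‖x - x'‖ ^ 2 + ‖y - y'‖ ^ 2))
    (hwc : ∀ y ∈ Y, ConvexOn ℝ Set.univ fun x : EuclideanSpace ℝ (Fin d) =>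
      f x y + ρ / 2 * ‖x‖ ^ 2)
    (hsc : ∀ x, ConcaveOn ℝ Y fun y => f x y + μy / 2 * ‖y‖ ^ 2)
    (P : EuclideanSpace ℝ (Fin d) → ℝ)
    (hP : ∀ x, IsGreatest ((fun y => f x y) '' Y) (P x))
    (x₀ x₁ : EuclideanSpace ℝ (Fin d)) (y₀ y₁ : EuclideanSpace ℝ (Fin d'))
    (hy₀ : y₀ ∈ Y) (hy₁ : y₁ ∈ Y)
    (M₁ m₁ M₂ m₂ : ℝ)
    (hM₁ : IsGreatest ((fun y => f x₁ y + ρ * ‖x₁ - x₀‖ ^ 2) '' Y) M₁)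
    (hm₁ : IsLeast (Set.range fun x => f x y₁ + ρ * ‖x - x₀‖ ^ 2) m₁)
    (hM₂ : IsGreatest ((fun y => f x₁ y + ρ * ‖x₁ - x₁‖ ^ 2) '' Y) M₂)
    (hm₂ : IsLeast (Set.range fun x => f x y₁ + ρ * ‖x - x₁‖ ^ 2) m₂) :
    M₁ - m₁ ≥ 3 / 50 * (M₂ - m₂) + 4 / 5 * (P x₁ - P x₀) :=
  stmt7_general Y f ρ hρ hwc P hP x₀ x₁ y₁ hy₁ M₁ m₁ M₂ m₂ hM₁ hm₁ hM₂ hm₂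
end

section
/- Let Y ⊆ ℝ^{d'} be a nonempty closed convex set, μ > 0, and let f : ℝ^d × Y → ℝ be differentiable, (μ/8)-weakly convex in x for every y, and μ_y-strongly concave in y for every x (μ_y > 0). Fix x₀ ∈ ℝ^d, y₀ ∈ Y, and a pair (x₁, y₁) ∈ ℝ^d × Y. Define f₁(x,y) = f(x,y) + (μ/8)‖x − x₀‖² and f₂(x,y) = f(x,y) + (μ/8)‖x − x₁‖², with duality gaps Gap_i(x,y) = max_{y'∈Y} f_i(x, y') − min_{x'∈ℝ^d} f_i(x', y) for i = 1, 2. Then for every α with 0 < α < 1: Gap₁(x₁, y₁) ≥ (3 − 2/α)·Gap₂(x₁, y₁) − (μα/(8(1−α)))·‖x₁ − x₀‖². -/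
/-!
The proximal term `(μ/8)‖x - x₁‖²` makes `x ↦ f x y₁ + (μ/8)‖x - x₁‖²` strongly convex with
modulus `μ/8`, so its minimiser `u` satisfies `(μ/16)‖u - x₁‖² ≤ f x₁ y₁ - m₂ ≤ Gap₂`. Moving the
centre from `x₁` to `x₀` raises the max-part by exactly `(μ/8)‖x₁ - x₀‖²`, while `u` witnesses
`m₁ ≤ m₂ + (μ/8)(‖u - x₀‖² - ‖u - x₁‖²)`. Splitting `‖u - x₀‖²` by the weighted inequality
`‖a + b‖² ≤ ‖a‖²/α + ‖b‖²/(1 - α)` and absorbing `‖u - x₁‖²` into `Gap₂` gives the bound.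
-/

open Set Filter Topology

section InnerProductSpace

variable {E : Type*} [NormedAddCommGroup E] [InnerProductSpace ℝ E]

lemma norm_add_sq_le_div_add_div (a b : E) {α : ℝ} (hα₀ : 0 < α) (hα₁ : α < 1) :
    ‖a + b‖ ^ 2 ≤ ‖a‖ ^ 2 / α + ‖b‖ ^ 2 / (1 - α) := by
  have h1α : 0 < 1 - α := by linarith
  have hdefect : α * (1 - α) * ‖a + b‖ ^ 2 + ‖(1 - α) • a - α • b‖ ^ 2
      = (1 - α) * ‖a‖ ^ 2 + α * ‖b‖ ^ 2 := by
    rw [norm_add_sq_real, norm_sub_sq_real, norm_smul, norm_smul, real_inner_smul_left,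
      real_inner_smul_right, Real.norm_of_nonneg h1α.le, Real.norm_of_nonneg hα₀.le]
    ring
  rw [div_add_div _ _ hα₀.ne' h1α.ne', le_div_iff₀ (by positivity)]
  nlinarith [sq_nonneg ‖(1 - α) • a - α • b‖]

lemma ConvexOn.strongConvexOn_add_mul_sq_norm_sub {g : E → ℝ} {c : ℝ}
    (hg : ConvexOn ℝ univ fun x => g x + c / 2 * ‖x‖ ^ 2) (z : E) :
    StrongConvexOn univ c fun x => g x + c * ‖x - z‖ ^ 2 := by
  rw [strongConvexOn_iff_convex]
  have haffine : ConvexOn ℝ univ fun x => -(2 * c) * inner ℝ z x + c * ‖z‖ ^ 2 :=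
    ((-(2 * c)) • innerₛₗ ℝ z).convexOn convex_univ |>.add_const _
  refine (hg.add haffine).congr fun x _ => ?_
  simp only [Pi.add_apply]
  rw [norm_sub_sq_real, real_inner_comm]
  ring

end InnerProductSpace

lemma StrongConvexOn.add_sq_norm_sub_le_of_isMinOn {E : Type*} [NormedAddCommGroup E]
    [NormedSpace ℝ E] {s : Set E} {m : ℝ} {φ : E → ℝ} {u x : E} (hφ : StrongConvexOn s m φ)
    (hmin : IsMinOn φ s u) (hu : u ∈ s) (hx : x ∈ s) :
    φ u + m / 2 * ‖x - u‖ ^ 2 ≤ φ x := by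
  have hlim : Tendsto (fun t : ℝ => φ u + (1 - t) * (m / 2 * ‖x - u‖ ^ 2)) (𝓝[>] 0)
      (𝓝 (φ u + m / 2 * ‖x - u‖ ^ 2)) := by
    have hcont : Continuous fun t : ℝ => φ u + (1 - t) * (m / 2 * ‖x - u‖ ^ 2) := by fun_prop
    convert hcont.continuousWithinAt.tendsto (x := 0) (s := Ioi 0) using 2
    ring
  refine le_of_tendsto hlim ?_
  filter_upwards [Ioo_mem_nhdsGT one_pos] with t ⟨ht₀, ht₁⟩
  have hseg : φ (t • x + (1 - t) • u)
      ≤ t * φ x + (1 - t) * φ u - t * (1 - t) * (m / 2 * ‖x - u‖ ^ 2) :=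
    hφ.2 hx hu ht₀.le (sub_nonneg.2 ht₁.le) (add_sub_cancel t 1)
  have hle : φ u ≤ φ (t • x + (1 - t) • u) :=
    hmin (hφ.1 hx hu ht₀.le (sub_nonneg.2 ht₁.le) (add_sub_cancel t 1))
  exact le_of_mul_le_mul_left (by linarith) ht₀

theorem stmt8_general {d d' : ℕ}
    (Y : Set (EuclideanSpace ℝ (Fin d')))
    (f : EuclideanSpace ℝ (Fin d) → EuclideanSpace ℝ (Fin d') → ℝ)
    (μ : ℝ) (hμ : 0 < μ)
    (hwc : ∀ y ∈ Y, ConvexOn ℝ Set.univ fun x : EuclideanSpace ℝ (Fin d) =>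
      f x y + (μ / 8) / 2 * ‖x‖ ^ 2)
    (x₀ x₁ : EuclideanSpace ℝ (Fin d)) (y₁ : EuclideanSpace ℝ (Fin d'))
    (hy₁ : y₁ ∈ Y)
    (M₁ m₁ M₂ m₂ : ℝ)
    (hM₁ : IsGreatest ((fun y => f x₁ y + μ / 8 * ‖x₁ - x₀‖ ^ 2) '' Y) M₁)
    (hm₁ : IsLeast (Set.range fun x => f x y₁ + μ / 8 * ‖x - x₀‖ ^ 2) m₁)
    (hM₂ : IsGreatest ((fun y => f x₁ y + μ / 8 * ‖x₁ - x₁‖ ^ 2) '' Y) M₂)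
    (hm₂ : IsLeast (Set.range fun x => f x y₁ + μ / 8 * ‖x - x₁‖ ^ 2) m₂) :
    ∀ α : ℝ, 0 < α → α < 1 →
      M₁ - m₁ ≥ (3 - 2 / α) * (M₂ - m₂) - μ * α / (8 * (1 - α)) * ‖x₁ - x₀‖ ^ 2 := by
  intro α hα₀ hα₁
  have h1α : 1 - α ≠ 0 := by linarith
  set c := μ / 8
  obtain ⟨u, hu⟩ := hm₂.1
  simp only at hu
  have hgrowth : c * ‖u - x₁‖ ^ 2 ≤ 2 * (M₂ - m₂) := by
    have hquad := ((hwc y₁ hy₁).strongConvexOn_add_mul_sq_norm_sub x₁)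
      |>.add_sq_norm_sub_le_of_isMinOn (fun x _ => hu.le.trans (hm₂.2 ⟨x, rfl⟩))
        (mem_univ u) (mem_univ x₁)
    have hfM₂ : f x₁ y₁ ≤ M₂ := by simpa using hM₂.2 ⟨y₁, hy₁, rfl⟩
    rw [sub_self, norm_zero, norm_sub_rev x₁ u] at hquad
    linarith
  have hM : M₂ + c * ‖x₁ - x₀‖ ^ 2 ≤ M₁ := by
    obtain ⟨y₂, hy₂, rfl⟩ := hM₂.1
    simpa using hM₁.2 ⟨y₂, hy₂, rfl⟩
  have hm : m₁ ≤ f u y₁ + c * ‖u - x₀‖ ^ 2 := hm₁.2 ⟨u, rfl⟩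
  have hsplit := norm_add_sq_le_div_add_div (u - x₁) (x₁ - x₀) hα₀ hα₁
  rw [sub_add_sub_cancel] at hsplit
  calc (3 - 2 / α) * (M₂ - m₂) - μ * α / (8 * (1 - α)) * ‖x₁ - x₀‖ ^ 2
      = (M₂ - m₂) - (1 - α) / α * (2 * (M₂ - m₂)) - c * α / (1 - α) * ‖x₁ - x₀‖ ^ 2 := by
        field_simp
        ring
    _ ≤ (M₂ - m₂) - (1 - α) / α * (c * ‖u - x₁‖ ^ 2) - c * α / (1 - α) * ‖x₁ - x₀‖ ^ 2 := by
        gcongr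
    _ = (M₂ - m₂) + c * ‖x₁ - x₀‖ ^ 2 + c * ‖u - x₁‖ ^ 2
          - c * (‖u - x₁‖ ^ 2 / α + ‖x₁ - x₀‖ ^ 2 / (1 - α)) := by
        field_simp
        ring
    _ ≤ (M₂ - m₂) + c * ‖x₁ - x₀‖ ^ 2 + c * ‖u - x₁‖ ^ 2 - c * ‖u - x₀‖ ^ 2 := by
        gcongr
    _ ≤ M₁ - m₁ := by
        linarith

/-- Lemma 8 (first part) of Yan et al. (2020): with `f₁(x,y) = f(x,y) + (μ/8)‖x − x₀‖²` and
`f₂(x,y) = f(x,y) + (μ/8)‖x − x₁‖²`, for every `0 < α < 1`,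
`Gap₁(x₁,y₁) ≥ (3 − 2/α)·Gap₂(x₁,y₁) − (μα/(8(1−α)))‖x₁ − x₀‖²`. -/
theorem stmt8 {d d' : ℕ}
    (Y : Set (EuclideanSpace ℝ (Fin d')))
    (hYne : Y.Nonempty) (hYcl : IsClosed Y) (hYcv : Convex ℝ Y)
    (f : EuclideanSpace ℝ (Fin d) → EuclideanSpace ℝ (Fin d') → ℝ)
    (μ μy : ℝ) (hμ : 0 < μ) (hμy : 0 < μy)
    (hdiff : Differentiable ℝ fun p : EuclideanSpace ℝ (Fin d) × EuclideanSpace ℝ (Fin d') =>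
      f p.1 p.2)
    (hwc : ∀ y ∈ Y, ConvexOn ℝ Set.univ fun x : EuclideanSpace ℝ (Fin d) =>
      f x y + (μ / 8) / 2 * ‖x‖ ^ 2)
    (hsc : ∀ x, ConcaveOn ℝ Y fun y => f x y + μy / 2 * ‖y‖ ^ 2)
    (x₀ x₁ : EuclideanSpace ℝ (Fin d)) (y₀ y₁ : EuclideanSpace ℝ (Fin d'))
    (hy₀ : y₀ ∈ Y) (hy₁ : y₁ ∈ Y)
    (M₁ m₁ M₂ m₂ : ℝ)
    (hM₁ : IsGreatest ((fun y => f x₁ y + μ / 8 * ‖x₁ - x₀‖ ^ 2) '' Y) M₁)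
    (hm₁ : IsLeast (Set.range fun x => f x y₁ + μ / 8 * ‖x - x₀‖ ^ 2) m₁)
    (hM₂ : IsGreatest ((fun y => f x₁ y + μ / 8 * ‖x₁ - x₁‖ ^ 2) '' Y) M₂)
    (hm₂ : IsLeast (Set.range fun x => f x y₁ + μ / 8 * ‖x - x₁‖ ^ 2) m₂) :
    ∀ α : ℝ, 0 < α → α < 1 →
      M₁ - m₁ ≥ (3 - 2 / α) * (M₂ - m₂) - μ * α / (8 * (1 - α)) * ‖x₁ - x₀‖ ^ 2 :=
  stmt8_general Y f μ hμ hwc x₀ x₁ y₁ hy₁ M₁ m₁ M₂ m₂ hM₁ hm₁ hM₂ hm₂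
end

section
/- Let Y ⊆ ℝ^{d'} be a nonempty closed convex set, γ > 0, λ > 0, μ_x > 0, x₀ ∈ ℝ^d, y₀ ∈ Y, and let f : ℝ^d × Y → ℝ be differentiable in x. Define f_γ(x,y) = f(x,y) + (γ/2)‖x − x₀‖² and assume: (a) for every y ∈ Y, x ↦ f_γ(x,y) is λ-strongly convex and attains its minimum over ℝ^d; (b) f satisfies the x-side μ_x-PL condition; (c) sup_{y∈Y} f(x₀, y) is finite. Set ε̂ = Gap_γ(x₀, y₀) := sup_{y∈Y} f_γ(x₀, y) − min_{x∈ℝ^d} f_γ(x, y₀). Then the duality gap of (x₀, y₀) for the original problem satisfies Gap(x₀, y₀) := sup_{y∈Y} f(x₀, y) − inf_{x∈ℝ^d} f(x, y₀) ≤ (1 + 4γ/λ + 4γ²/(λ μ_x))·ε̂. In particular, with γ = 2ρ and λ = ρ (the setting of the proximal epoch method for ρ-weakly convex f), Gap(x₀, y₀) ≤ 9ε̂ + (16ρ/μ_x)·ε̂. -/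
/-!
Let `xs` minimize the regularized objective `f x y₀ + γ/2 ‖x - x₀‖²`, whose minimum is `mγ`.
Strong convexity bounds `‖xs - x₀‖²` by `4/λ` times `f x₀ y₀ - mγ ≤ ε̂`. First-order optimality
gives `∇ₓ f(xs, y₀) = γ (x₀ - xs)`, so the PL inequality at `xs` bounds `f xs y₀ - inf f(·, y₀)`
by `γ²/(2μₓ) ‖xs - x₀‖²`. Hence `mγ - inf f(·, y₀)` is at most `(2γ/λ + 2γ²/(λμₓ)) ε̂`, and the
original gap is `ε̂` plus this difference.
-/

open InnerProductSpace Set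

lemma StrongConvexOn.quarter_mul_sq_norm_sub_le_of_isMinOn {E : Type*} [NormedAddCommGroup E]
    [NormedSpace ℝ E] {s : Set E} {m : ℝ} {f : E → ℝ} {x xs : E} (hf : StrongConvexOn s m f)
    (hmin : IsMinOn f s xs) (hx : x ∈ s) (hxs : xs ∈ s) :
    m / 4 * ‖x - xs‖ ^ 2 ≤ f x - f xs := by
  -- Compare with the midpoint; this gives `m / 4` rather than the sharp `m / 2`.
  have hmid := hf.2 hx hxs (by norm_num : (0 : ℝ) ≤ 1 / 2) (by norm_num : (0 : ℝ) ≤ 1 / 2)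
    (by norm_num)
  have hle : f xs ≤ f ((1 / 2 : ℝ) • x + (1 / 2 : ℝ) • xs) :=
    hmin (hf.1 hx hxs (by norm_num) (by norm_num) (by norm_num))
  simp only [smul_eq_mul] at hmid
  linarith

section InnerProductSpace

variable {E : Type*} [NormedAddCommGroup E] [InnerProductSpace ℝ E]

lemma hasGradientAt_half_mul_norm_sub_sq [CompleteSpace E] (γ : ℝ) (x₀ x : E) :
    HasGradientAt (fun x' => γ / 2 * ‖x' - x₀‖ ^ 2) (γ • (x - x₀)) x := by
  rw [hasGradientAt_iff_hasFDerivAt]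
  refine (((hasFDerivAt_id x).sub_const x₀).norm_sq.const_mul (γ / 2)).congr_fderiv ?_
  ext v
  simp [toDual_apply_apply]
  ring

lemma IsLocalMin.gradient_eq_smul_sub [CompleteSpace E] {f : E → ℝ} {γ : ℝ} {x₀ xs : E}
    (hmin : IsLocalMin (fun x => f x + γ / 2 * ‖x - x₀‖ ^ 2) xs) (hf : DifferentiableAt ℝ f xs) :
    gradient f xs = γ • (x₀ - xs) := by
  have hsum := hf.hasGradientAt.hasFDerivAt.add
    (hasGradientAt_half_mul_norm_sub_sq γ x₀ xs).hasFDerivAt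
  rw [← map_add] at hsum
  have hzero := (toDual ℝ E).map_eq_zero_iff.1 (hmin.hasFDerivAt_eq_zero hsum)
  rw [smul_sub, ← neg_sub, ← smul_sub]
  exact eq_neg_of_add_eq_zero_left hzero

lemma IsMinOn.add_half_mul_norm_sub_sq_sub_le [CompleteSpace E] {g : E → ℝ} {γ lam μ m : ℝ}
    {x₀ xs : E} (hmin : IsMinOn (fun x => g x + γ / 2 * ‖x - x₀‖ ^ 2) univ xs)
    (hg : DifferentiableAt ℝ g xs)
    (hsc : StrongConvexOn univ lam fun x => g x + γ / 2 * ‖x - x₀‖ ^ 2)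
    (hPL : ∀ x, ‖gradient g x‖ ^ 2 ≥ 2 * μ * (g x - m)) (hγ : 0 ≤ γ) (hlam : 0 < lam)
    (hμ : 0 < μ) :
    g xs + γ / 2 * ‖xs - x₀‖ ^ 2 - m ≤
      (2 * γ / lam + 2 * γ ^ 2 / (lam * μ)) * (g x₀ - (g xs + γ / 2 * ‖xs - x₀‖ ^ 2)) := by
  set D := ‖xs - x₀‖ ^ 2
  have hgrowth : lam / 4 * D ≤ g x₀ - (g xs + γ / 2 * D) := by
    have := hsc.quarter_mul_sq_norm_sub_le_of_isMinOn hmin (mem_univ x₀) (mem_univ xs)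
    simpa [norm_sub_rev x₀ xs] using this
  have hPLxs : g xs - m ≤ γ ^ 2 / (2 * μ) * D := by
    have hgrad : ‖gradient g xs‖ ^ 2 = γ ^ 2 * D := by
      rw [(hmin.isLocalMin Filter.univ_mem).gradient_eq_smul_sub hg, norm_smul, mul_pow,
        Real.norm_eq_abs, sq_abs, norm_sub_rev]
    rw [div_mul_eq_mul_div, le_div_iff₀ (by positivity)]
    linarith [hPL xs]
  calc g xs + γ / 2 * D - m ≤ (γ / 2 + γ ^ 2 / (2 * μ)) * D := by linarith
    _ = (2 * γ / lam + 2 * γ ^ 2 / (lam * μ)) * (lam / 4 * D) := by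
      field_simp
      ring
    _ ≤ _ := by gcongr

end InnerProductSpace

theorem stmt12_general {d d' : ℕ}
    (Y : Set (EuclideanSpace ℝ (Fin d')))
    (f : EuclideanSpace ℝ (Fin d) → EuclideanSpace ℝ (Fin d') → ℝ)
    (γ lam μx : ℝ) (hγ : 0 < γ) (hlam : 0 < lam) (hμx : 0 < μx)
    (x₀ : EuclideanSpace ℝ (Fin d)) (y₀ : EuclideanSpace ℝ (Fin d')) (hy₀ : y₀ ∈ Y)
    (hdiff : ∀ y ∈ Y, Differentiable ℝ fun x : EuclideanSpace ℝ (Fin d) => f x y)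
    (hsc : ∀ y ∈ Y, ConvexOn ℝ Set.univ fun x : EuclideanSpace ℝ (Fin d) =>
      (f x y + γ / 2 * ‖x - x₀‖ ^ 2) - lam / 2 * ‖x‖ ^ 2)
    (hxPL : ∀ y ∈ Y, ∃ my : ℝ, IsGLB (Set.range fun x => f x y) my ∧
      ∀ x, ‖gradient (fun x' => f x' y) x‖ ^ 2 ≥ 2 * μx * (f x y - my))
    (S mγ m₀ : ℝ)
    (hS : IsLUB ((fun y => f x₀ y) '' Y) S)
    (hmγ : IsLeast (Set.range fun x => f x y₀ + γ / 2 * ‖x - x₀‖ ^ 2) mγ)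
    (hm₀ : IsGLB (Set.range fun x => f x y₀) m₀) :
    S - m₀ ≤ (1 + 4 * γ / lam + 4 * γ ^ 2 / (lam * μx)) * (S - mγ) ∧
    (∀ ρ : ℝ, 0 < ρ → γ = 2 * ρ → lam = ρ →
      S - m₀ ≤ 9 * (S - mγ) + 16 * ρ / μx * (S - mγ)) := by
  obtain ⟨xs, hxs : f xs y₀ + γ / 2 * ‖xs - x₀‖ ^ 2 = mγ⟩ := hmγ.1
  have hmin : IsMinOn (fun x => f x y₀ + γ / 2 * ‖x - x₀‖ ^ 2) univ xs :=
    fun x _ => hxs.trans_le (hmγ.2 ⟨x, rfl⟩)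
  obtain ⟨my, hmy, hPL⟩ := hxPL y₀ hy₀
  have hprox := hmin.add_half_mul_norm_sub_sq_sub_le (hdiff y₀ hy₀ xs)
    (strongConvexOn_iff_convex.2 (hsc y₀ hy₀)) (hmy.unique hm₀ ▸ hPL) hγ.le hlam hμx
  rw [hxs] at hprox
  have hx₀S : f x₀ y₀ ≤ S := hS.1 ⟨y₀, hy₀, rfl⟩
  have hε : 0 ≤ S - mγ := by
    have := hmγ.2 ⟨x₀, rfl⟩
    simp only [sub_self, norm_zero] at this
    linarith
  have hmain : S - m₀ ≤ (1 + 4 * γ / lam + 4 * γ ^ 2 / (lam * μx)) * (S - mγ) :=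
    calc S - m₀ = (S - mγ) + (mγ - m₀) := by ring
      _ ≤ (S - mγ) + (2 * γ / lam + 2 * γ ^ 2 / (lam * μx)) * (f x₀ y₀ - mγ) := by linarith
      _ ≤ (S - mγ) + (2 * γ / lam + 2 * γ ^ 2 / (lam * μx)) * (S - mγ) := by gcongr
      _ = (1 + 2 * γ / lam + 2 * γ ^ 2 / (lam * μx)) * (S - mγ) := by ring
      _ ≤ (1 + 4 * γ / lam + 4 * γ ^ 2 / (lam * μx)) * (S - mγ) := by gcongr <;> norm_num
  refine ⟨hmain, fun ρ _ hγρ hlamρ => hmain.trans_eq ?_⟩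
  subst hγρ hlamρ
  field_simp
  ring

/-- If `f_γ(·,y)` is λ-strongly convex and attains its minimum, `f` satisfies the x-side
`μx`-PL condition, and `sup_{y∈Y} f(x₀,y)` is finite, then the duality gap of `(x₀,y₀)` for the
original problem is bounded by `(1 + 4γ/λ + 4γ²/(λμx))` times the regularized duality gap;
in particular, with `γ = 2ρ` and `λ = ρ`, `Gap(x₀,y₀) ≤ 9ε̂ + (16ρ/μx)ε̂`. -/
theorem stmt12 {d d' : ℕ}
    (Y : Set (EuclideanSpace ℝ (Fin d')))
    (hYne : Y.Nonempty) (hYcl : IsClosed Y) (hYcv : Convex ℝ Y)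
    (f : EuclideanSpace ℝ (Fin d) → EuclideanSpace ℝ (Fin d') → ℝ)
    (γ lam μx : ℝ) (hγ : 0 < γ) (hlam : 0 < lam) (hμx : 0 < μx)
    (x₀ : EuclideanSpace ℝ (Fin d)) (y₀ : EuclideanSpace ℝ (Fin d')) (hy₀ : y₀ ∈ Y)
    (hdiff : ∀ y ∈ Y, Differentiable ℝ fun x : EuclideanSpace ℝ (Fin d) => f x y)
    (hsc : ∀ y ∈ Y, ConvexOn ℝ Set.univ fun x : EuclideanSpace ℝ (Fin d) =>
      (f x y + γ / 2 * ‖x - x₀‖ ^ 2) - lam / 2 * ‖x‖ ^ 2)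
    (hattain : ∀ y ∈ Y, ∃ xm : EuclideanSpace ℝ (Fin d), ∀ x,
      f xm y + γ / 2 * ‖xm - x₀‖ ^ 2 ≤ f x y + γ / 2 * ‖x - x₀‖ ^ 2)
    (hxPL : ∀ y ∈ Y, ∃ my : ℝ, IsGLB (Set.range fun x => f x y) my ∧
      ∀ x, ‖gradient (fun x' => f x' y) x‖ ^ 2 ≥ 2 * μx * (f x y - my))
    (S mγ m₀ : ℝ)
    (hS : IsLUB ((fun y => f x₀ y) '' Y) S)
    (hmγ : IsLeast (Set.range fun x => f x y₀ + γ / 2 * ‖x - x₀‖ ^ 2) mγ)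
    (hm₀ : IsGLB (Set.range fun x => f x y₀) m₀) :
    S - m₀ ≤ (1 + 4 * γ / lam + 4 * γ ^ 2 / (lam * μx)) * (S - mγ) ∧
    (∀ ρ : ℝ, 0 < ρ → γ = 2 * ρ → lam = ρ →
      S - m₀ ≤ 9 * (S - mγ) + 16 * ρ / μx * (S - mγ)) :=
  stmt12_general Y f γ lam μx hγ hlam hμx x₀ y₀ hy₀ hdiff hsc hxPL S mγ m₀ hS hmγ hm₀
end

section
/- Let Z ⊆ ℝ^n be a nonempty closed convex set, F : Z → ℝ^n be ℓ-Lipschitz (ℓ > 0), and let 0 < η ≤ 1/(4√3·ℓ). Let z₀ = z̃₀ ∈ Z and let G₀, G₁, ..., G_T ∈ ℝ^n be arbitrary vectors generating the optimistic gradient descent ascent recursion z_t = Π_{z̃_{t−1}}(η G_{t−1}) and z̃_t = Π_{z̃_{t−1}}(η G_t) for t = 1, ..., T. Set Θ_t = F(z_t) − G_t for t = 0, ..., T. Then for every z ∈ Z: (1/T) Σ_{t=1}^{T} ⟨G_t, z_t − z⟩ ≤ ‖z − z₀‖²/(2ηT) + (3η/T) Σ_{t=1}^{T} (‖Θ_t‖²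 + ‖Θ_{t−1}‖²). -/
open scoped RealInnerProductSpace

lemma prox_vi_s13 {Fv : Type*} [NormedAddCommGroup Fv] [InnerProductSpace ℝ Fv]
    {Z : Set Fv} (hZ : Convex ℝ Z) {g v x : Fv} (hx : x ∈ Z)
    (hmin : ∀ u ∈ Z, ⟪g, x⟫ + 1 / 2 * ‖x - v‖ ^ 2 ≤ ⟪g, u⟫ + 1 / 2 * ‖u - v‖ ^ 2) :
    ∀ u ∈ Z, ⟪g, x - u⟫ ≤ 1 / 2 * ‖u - v‖ ^ 2 - 1 / 2 * ‖u - x‖ ^ 2 - 1 / 2 * ‖x - v‖ ^ 2 := by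
  have key : ∀ u : Fv, ⟪g, u⟫ + 1 / 2 * ‖u - v‖ ^ 2 =
      ⟪g, x⟫ + 1 / 2 * ‖x - v‖ ^ 2 + ⟪g + (x - v), u - x⟫ + 1 / 2 * ‖u - x‖ ^ 2 := by
    intro u
    have h1 : u - v = (x - v) + (u - x) := by abel
    rw [h1, norm_add_sq_real, inner_add_left]
    have h2 : ⟪g, u⟫ = ⟪g, x⟫ + ⟪g, u - x⟫ := by rw [inner_sub_right]; ring
    rw [h2]; ring
  intro u hu
  have hc : 0 ≤ ⟪g + (x - v), u - x⟫ := by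
    set c := ⟪g + (x - v), u - x⟫ with hcdef
    set d := ‖u - x‖ ^ 2 with hddef
    have hd : 0 ≤ d := by positivity
    have hlam : ∀ lam : ℝ, 0 ≤ lam → lam ≤ 1 → 0 ≤ lam * c + lam ^ 2 * d / 2 := by
      intro lam h0 h1
      have hmem : x + lam • (u - x) ∈ Z := by
        have h := hZ hx hu (by linarith : (0:ℝ) ≤ 1 - lam) h0 (by ring)
        have he : (1 - lam) • x + lam • u = x + lam • (u - x) := by module
        rwa [he] at h
      have hm := hmin _ hmem
      rw [key (x + lam • (u - x))] at hm
      have e1 : x + lam • (u - x) - x = lam • (u - x) := by abel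
      rw [e1, real_inner_smul_right] at hm
      have e2 : ‖lam • (u - x)‖ ^ 2 = lam ^ 2 * d := by
        rw [norm_smul, mul_pow, Real.norm_eq_abs, sq_abs, hddef]
      rw [e2] at hm
      linarith
    by_contra hcneg
    push_neg at hcneg
    rcases eq_or_lt_of_le hd with hd0 | hdpos
    · have := hlam 1 zero_le_one le_rfl
      rw [← hd0] at this
      linarith
    · set lam0 := min 1 (-c / d) with hl0
      have hpos : 0 < lam0 := lt_min one_pos (div_pos (neg_pos.2 hcneg) hdpos)
      have h1 : lam0 ≤ 1 := min_le_left _ _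
      have h2 : lam0 * d ≤ -c := (le_div_iff₀ hdpos).mp (min_le_right _ _)
      have h3 := hlam lam0 hpos.le h1
      nlinarith
  have hkey := key u
  have hgux : ⟪g, x - u⟫ = ⟪g, x⟫ - ⟪g, u⟫ := by rw [inner_sub_right]
  linarith

lemma prox_contraction {Fv : Type*} [NormedAddCommGroup Fv] [InnerProductSpace ℝ Fv]
    {Z : Set Fv} (hZ : Convex ℝ Z) {g1 g2 v x y : Fv} (hx : x ∈ Z) (hy : y ∈ Z)
    (hmin1 : ∀ u ∈ Z, ⟪g1, x⟫ + 1 / 2 * ‖x - v‖ ^ 2 ≤ ⟪g1, u⟫ + 1 / 2 * ‖u - v‖ ^ 2)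
    (hmin2 : ∀ u ∈ Z, ⟪g2, y⟫ + 1 / 2 * ‖y - v‖ ^ 2 ≤ ⟪g2, u⟫ + 1 / 2 * ‖u - v‖ ^ 2) :
    ‖x - y‖ ^ 2 ≤ ‖g1 - g2‖ ^ 2 := by
  have h1 := prox_vi_s13 hZ hx hmin1 y hy
  have h2 := prox_vi_s13 hZ hy hmin2 x hx
  have hrev : ‖y - x‖ = ‖x - y‖ := norm_sub_rev _ _
  have hrev2 : ‖y - x‖ ^ 2 = ‖x - y‖ ^ 2 := by rw [hrev]
  have hsum : ⟪g2 - g1, x - y⟫ ≥ ‖x - y‖ ^ 2 := by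
    have e : ⟪g2 - g1, x - y⟫ = -(⟪g1, x - y⟫ + ⟪g2, y - x⟫) := by
      simp [inner_sub_left, inner_sub_right]; ring
    rw [e]
    linarith
  have hcs := real_inner_le_norm (g2 - g1) (x - y)
  have hrevg : ‖g2 - g1‖ = ‖g1 - g2‖ := norm_sub_rev _ _
  rw [hrevg] at hcs
  nlinarith [sq_nonneg (‖g1 - g2‖ - ‖x - y‖), norm_nonneg (x - y), norm_nonneg (g1 - g2)]

lemma sq_sum3_bound {a b c d e l : ℝ} (ha : 0 ≤ a) (hb : 0 ≤ b) (hc : 0 ≤ c) (hd : 0 ≤ d)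
    (he : 0 ≤ e) (hl : 0 ≤ l) (h1 : a ≤ b + c + d) (h2 : b ≤ l * e) :
    a ^ 2 ≤ 3 * l ^ 2 * e ^ 2 + 3 * (c ^ 2 + d ^ 2) := by
  have hb2 : b ^ 2 ≤ l ^ 2 * e ^ 2 := by nlinarith
  have ha2 : a ^ 2 ≤ (b + c + d) ^ 2 := by nlinarith
  nlinarith [sq_nonneg (b - c), sq_nonneg (b - d), sq_nonneg (c - d)]

lemma sq_sum2_bound {a b c : ℝ} (ha : 0 ≤ a) (hb : 0 ≤ b) (hc : 0 ≤ c)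
    (h1 : a ≤ b + c) : a ^ 2 ≤ 2 * b ^ 2 + 2 * c ^ 2 := by
  nlinarith [sq_nonneg (b - c)]

set_option maxHeartbeats 1000000 in
/-- Deterministic regret bound for the OGDA recursion `z_t = Π_{z̃_{t−1}}(η G_{t−1})`,
`z̃_t = Π_{z̃_{t−1}}(η G_t)` with `F` ℓ-Lipschitz and `η ≤ 1/(4√3 ℓ)`:
`(1/T) Σ ⟨G_t, z_t − z⟩ ≤ ‖z − z₀‖²/(2ηT) + (3η/T) Σ (‖Θ_t‖² + ‖Θ_{t−1}‖²)`
where `Θ_t = F(z_t) − G_t`. -/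
theorem stmt13 {n : ℕ} (Z : Set (EuclideanSpace ℝ (Fin n)))
    (hZne : Z.Nonempty) (hZcl : IsClosed Z) (hZcv : Convex ℝ Z)
    (F : EuclideanSpace ℝ (Fin n) → EuclideanSpace ℝ (Fin n))
    (ℓ : ℝ) (hℓ : 0 < ℓ)
    (hF : ∀ z ∈ Z, ∀ z' ∈ Z, ‖F z - F z'‖ ≤ ℓ * ‖z - z'‖)
    (η : ℝ) (hη : 0 < η) (hη' : η ≤ 1 / (4 * Real.sqrt 3 * ℓ))
    (T : ℕ) (hT : 1 ≤ T)
    (G : ℕ → EuclideanSpace ℝ (Fin n))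
    (z zt : ℕ → EuclideanSpace ℝ (Fin n))
    (hz0 : z 0 ∈ Z) (hzt0 : zt 0 = z 0)
    (hz : ∀ t ∈ Finset.Icc 1 T, z t ∈ Z ∧ ∀ u ∈ Z,
      ⟪η • G (t - 1), z t⟫ + 1 / 2 * ‖z t - zt (t - 1)‖ ^ 2 ≤
        ⟪η • G (t - 1), u⟫ + 1 / 2 * ‖u - zt (t - 1)‖ ^ 2)
    (hzt : ∀ t ∈ Finset.Icc 1 T, zt t ∈ Z ∧ ∀ u ∈ Z,
      ⟪η • G t, zt t⟫ + 1 / 2 * ‖zt t - zt (t - 1)‖ ^ 2 ≤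
        ⟪η • G t, u⟫ + 1 / 2 * ‖u - zt (t - 1)‖ ^ 2) :
    ∀ w ∈ Z, (1 / (T : ℝ)) * ∑ t ∈ Finset.Icc 1 T, ⟪G t, z t - w⟫ ≤
      ‖w - z 0‖ ^ 2 / (2 * η * (T : ℝ)) +
        3 * η / (T : ℝ) * ∑ t ∈ Finset.Icc 1 T,
          (‖F (z t) - G t‖ ^ 2 + ‖F (z (t - 1)) - G (t - 1)‖ ^ 2) := by
  intro w hw
  obtain ⟨T', rfl⟩ : ∃ T', T = T' + 1 := ⟨T - 1, by omega⟩
  -- basic numeric facts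
  have hs3 : (0:ℝ) < Real.sqrt 3 := Real.sqrt_pos.mpr (by norm_num)
  have hs3sq : Real.sqrt 3 ^ 2 = 3 := Real.sq_sqrt (by norm_num)
  have h48 : η ^ 2 * ℓ ^ 2 ≤ 1 / 48 := by
    have hden : (0:ℝ) < 4 * Real.sqrt 3 * ℓ := by positivity
    have h1 : η * (4 * Real.sqrt 3 * ℓ) ≤ 1 := (le_div_iff₀ hden).mp hη'
    nlinarith [mul_pos hη hden]
  have hTpos : (0:ℝ) < ((T' + 1 : ℕ) : ℝ) := by positivity
  -- membership facts
  have hzZ : ∀ i, i ≤ T' + 1 → z i ∈ Z := by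
    intro i hi
    rcases Nat.eq_zero_or_pos i with h | h
    · rw [h]; exact hz0
    · exact (hz i (Finset.mem_Icc.mpr ⟨h, hi⟩)).1
  have hztZ : ∀ i, i ≤ T' + 1 → zt i ∈ Z := by
    intro i hi
    rcases Nat.eq_zero_or_pos i with h | h
    · rw [h, hzt0]; exact hz0
    · exact (hzt i (Finset.mem_Icc.mpr ⟨h, hi⟩)).1
  -- minimization properties at step i+1 (with natural subtraction simplified)
  have hzmin : ∀ i, i ≤ T' → ∀ u ∈ Z,
      ⟪η • G i, z (i + 1)⟫ + 1 / 2 * ‖z (i + 1) - zt i‖ ^ 2 ≤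
        ⟪η • G i, u⟫ + 1 / 2 * ‖u - zt i‖ ^ 2 := by
    intro i hi
    have h := (hz (i + 1) (Finset.mem_Icc.mpr ⟨by omega, by omega⟩)).2
    simpa using h
  have hztmin : ∀ i, i ≤ T' → ∀ u ∈ Z,
      ⟪η • G (i + 1), zt (i + 1)⟫ + 1 / 2 * ‖zt (i + 1) - zt i‖ ^ 2 ≤
        ⟪η • G (i + 1), u⟫ + 1 / 2 * ‖u - zt i‖ ^ 2 := by
    intro i hi
    have h := (hzt (i + 1) (Finset.mem_Icc.mpr ⟨by omega, by omega⟩)).2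
    simpa using h
  -- per-step inequality C1
  have hC1 : ∀ i ∈ Finset.range (T' + 1),
      η * ⟪G (i + 1), z (i + 1) - w⟫ ≤
        (1 / 2 * ‖w - zt i‖ ^ 2 - 1 / 2 * ‖w - zt (i + 1)‖ ^ 2) +
          (η ^ 2 / 2 * ‖G (i + 1) - G i‖ ^ 2 - 1 / 2 * ‖z (i + 1) - zt i‖ ^ 2) := by
    intro i hi
    rw [Finset.mem_range] at hi
    have hi' : i ≤ T' := by omega
    have hz1 : z (i + 1) ∈ Z := hzZ (i + 1) (by omega)
    have hzt1 : zt (i + 1) ∈ Z := hztZ (i + 1) (by omega)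
    have TP1 := prox_vi_s13 hZcv hz1 (hzmin i hi') (zt (i + 1)) hzt1
    have TP2 := prox_vi_s13 hZcv hzt1 (hztmin i hi') w hw
    have hdecomp : η * ⟪G (i + 1), z (i + 1) - w⟫ =
        ⟪η • (G (i + 1) - G i), z (i + 1) - zt (i + 1)⟫ +
          ⟪η • G i, z (i + 1) - zt (i + 1)⟫ + ⟪η • G (i + 1), zt (i + 1) - w⟫ := by
      simp only [real_inner_smul_left, inner_sub_left, inner_sub_right]
      ring
    have hY : ⟪η • (G (i + 1) - G i), z (i + 1) - zt (i + 1)⟫ ≤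
        η ^ 2 / 2 * ‖G (i + 1) - G i‖ ^ 2 + 1 / 2 * ‖z (i + 1) - zt (i + 1)‖ ^ 2 := by
      have hcs := real_inner_le_norm (η • (G (i + 1) - G i)) (z (i + 1) - zt (i + 1))
      have hn : ‖η • (G (i + 1) - G i)‖ = η * ‖G (i + 1) - G i‖ := by
        rw [norm_smul, Real.norm_eq_abs, abs_of_pos hη]
      rw [hn] at hcs
      nlinarith [sq_nonneg (η * ‖G (i + 1) - G i‖ - ‖z (i + 1) - zt (i + 1)‖)]
    have hrev : ‖zt (i + 1) - z (i + 1)‖ ^ 2 = ‖z (i + 1) - zt (i + 1)‖ ^ 2 := by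
      rw [norm_sub_rev]
    rw [hrev] at TP1
    linarith [hdecomp, hY, TP1, TP2]
  -- C2 : gradient difference bound
  have hC2 : ∀ i ∈ Finset.range (T' + 1),
      ‖G (i + 1) - G i‖ ^ 2 ≤ 3 * ℓ ^ 2 * ‖z (i + 1) - z i‖ ^ 2 +
        3 * (‖F (z (i + 1)) - G (i + 1)‖ ^ 2 + ‖F (z i) - G i‖ ^ 2) := by
    intro i hi
    rw [Finset.mem_range] at hi
    have hz1 : z (i + 1) ∈ Z := hzZ (i + 1) (by omega)
    have hz2 : z i ∈ Z := hzZ i (by omega)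
    have hFlip : ‖F (z (i + 1)) - F (z i)‖ ≤ ℓ * ‖z (i + 1) - z i‖ := hF _ hz1 _ hz2
    have hdec : G (i + 1) - G i = (F (z (i + 1)) - F (z i)) -
        (F (z (i + 1)) - G (i + 1)) + (F (z i) - G i) := by abel
    have htri : ‖G (i + 1) - G i‖ ≤ ‖F (z (i + 1)) - F (z i)‖ +
        ‖F (z (i + 1)) - G (i + 1)‖ + ‖F (z i) - G i‖ := by
      rw [hdec]
      calc ‖F (z (i + 1)) - F (z i) - (F (z (i + 1)) - G (i + 1)) + (F (z i) - G i)‖ ≤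
          ‖F (z (i + 1)) - F (z i) - (F (z (i + 1)) - G (i + 1))‖ + ‖F (z i) - G i‖ :=
            norm_add_le _ _
        _ ≤ ‖F (z (i + 1)) - F (z i)‖ + ‖F (z (i + 1)) - G (i + 1)‖ + ‖F (z i) - G i‖ := by
            have := norm_sub_le (F (z (i + 1)) - F (z i)) (F (z (i + 1)) - G (i + 1))
            linarith
    exact sq_sum3_bound (norm_nonneg _) (norm_nonneg _) (norm_nonneg _) (norm_nonneg _)
      (norm_nonneg _) hℓ.le htri hFlip
  -- C3 : iterate difference bound via contraction
  have hC3 : ∀ i ∈ Finset.range T',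
      ‖z (i + 2) - z (i + 1)‖ ^ 2 ≤
        2 * ‖z (i + 2) - zt (i + 1)‖ ^ 2 + 2 * η ^ 2 * ‖G (i + 1) - G i‖ ^ 2 := by
    intro i hi
    rw [Finset.mem_range] at hi
    have hz1 : z (i + 1) ∈ Z := hzZ (i + 1) (by omega)
    have hzt1 : zt (i + 1) ∈ Z := hztZ (i + 1) (by omega)
    have hcontr : ‖z (i + 1) - zt (i + 1)‖ ^ 2 ≤ ‖η • G i - η • G (i + 1)‖ ^ 2 :=
      prox_contraction hZcv hz1 hzt1 (hzmin i (by omega)) (hztmin i (by omega))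
    have hg : ‖η • G i - η • G (i + 1)‖ ^ 2 = η ^ 2 * ‖G (i + 1) - G i‖ ^ 2 := by
      have : η • G i - η • G (i + 1) = (-η) • (G (i + 1) - G i) := by module
      rw [this, norm_smul, Real.norm_eq_abs, abs_neg, abs_of_pos hη, mul_pow]
    rw [hg] at hcontr
    have htri : ‖z (i + 2) - z (i + 1)‖ ≤ ‖z (i + 2) - zt (i + 1)‖ + ‖zt (i + 1) - z (i + 1)‖ :=
      norm_sub_le_norm_sub_add_norm_sub _ _ _
    have hrev : ‖zt (i + 1) - z (i + 1)‖ = ‖z (i + 1) - zt (i + 1)‖ := norm_sub_rev _ _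
    rw [hrev] at htri
    have h2 := sq_sum2_bound (norm_nonneg (z (i + 2) - z (i + 1)))
      (norm_nonneg (z (i + 2) - zt (i + 1))) (norm_nonneg (z (i + 1) - zt (i + 1))) htri
    linarith
  -- sums
  set SD := ∑ i ∈ Finset.range (T' + 1), ‖G (i + 1) - G i‖ ^ 2 with hSDdef
  set SA := ∑ i ∈ Finset.range (T' + 1), ‖z (i + 1) - zt i‖ ^ 2 with hSAdef
  set SE := ∑ i ∈ Finset.range (T' + 1),
      (‖F (z (i + 1)) - G (i + 1)‖ ^ 2 + ‖F (z i) - G i‖ ^ 2) with hSEdef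
  set Sb := ∑ i ∈ Finset.range (T' + 1), ‖z (i + 1) - z i‖ ^ 2 with hSbdef
  have hSDnn : 0 ≤ SD := Finset.sum_nonneg fun i _ => by positivity
  have hSAnn : 0 ≤ SA := Finset.sum_nonneg fun i _ => by positivity
  have hSEnn : 0 ≤ SE := Finset.sum_nonneg fun i _ => by positivity
  -- Sb ≤ 2 SA + 2 η² SD
  have hSb : Sb ≤ 2 * SA + 2 * η ^ 2 * SD := by
    have h0 : ‖z 1 - z 0‖ ^ 2 = ‖z (0 + 1) - zt 0‖ ^ 2 := by rw [hzt0]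
    have hsplit : Sb = (∑ i ∈ Finset.range T', ‖z (i + 1 + 1) - z (i + 1)‖ ^ 2) +
        ‖z (0 + 1) - z 0‖ ^ 2 := Finset.sum_range_succ' _ _
    have hb : (∑ i ∈ Finset.range T', ‖z (i + 1 + 1) - z (i + 1)‖ ^ 2) ≤
        ∑ i ∈ Finset.range T', (2 * ‖z (i + 2) - zt (i + 1)‖ ^ 2 +
          2 * η ^ 2 * ‖G (i + 1) - G i‖ ^ 2) := by
      apply Finset.sum_le_sum
      intro i hi
      exact hC3 i hi
    have hSA' : SA = (∑ i ∈ Finset.range T', ‖z (i + 1 + 1) - zt (i + 1)‖ ^ 2) +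
        ‖z (0 + 1) - zt 0‖ ^ 2 := Finset.sum_range_succ' _ _
    have hSD' : (∑ i ∈ Finset.range T', ‖G (i + 1) - G i‖ ^ 2) ≤ SD := by
      rw [hSDdef, Finset.sum_range_succ]
      have : 0 ≤ ‖G (T' + 1) - G T'‖ ^ 2 := by positivity
      linarith
    have hsum2 : (∑ i ∈ Finset.range T', (2 * ‖z (i + 2) - zt (i + 1)‖ ^ 2 +
        2 * η ^ 2 * ‖G (i + 1) - G i‖ ^ 2)) =
        2 * (∑ i ∈ Finset.range T', ‖z (i + 1 + 1) - zt (i + 1)‖ ^ 2) +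
        2 * η ^ 2 * (∑ i ∈ Finset.range T', ‖G (i + 1) - G i‖ ^ 2) := by
      rw [Finset.sum_add_distrib, ← Finset.mul_sum, ← Finset.mul_sum]
    have hA0 : 0 ≤ ‖z (0 + 1) - zt 0‖ ^ 2 := by positivity
    have hη2 : 0 ≤ 2 * η ^ 2 := by positivity
    have := mul_le_mul_of_nonneg_left hSD' hη2
    rw [hsplit, h0]
    rw [hsum2] at hb
    linarith [hSA'.ge, hSA'.le]
  -- SD bound
  have hSD : SD ≤ 3 * ℓ ^ 2 * Sb + 3 * SE := by
    have h := Finset.sum_le_sum hC2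
    calc SD ≤ ∑ i ∈ Finset.range (T' + 1), (3 * ℓ ^ 2 * ‖z (i + 1) - z i‖ ^ 2 +
        3 * (‖F (z (i + 1)) - G (i + 1)‖ ^ 2 + ‖F (z i) - G i‖ ^ 2)) := h
      _ = 3 * ℓ ^ 2 * Sb + 3 * SE := by
        rw [Finset.sum_add_distrib, ← Finset.mul_sum, ← Finset.mul_sum]
  -- key energy claim
  have hkey : η ^ 2 / 2 * SD - 1 / 2 * SA ≤ 3 * η ^ 2 * SE := by
    have hSbnn : 0 ≤ Sb := Finset.sum_nonneg fun i _ => by positivity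
    have hchain : SD ≤ 6 * ℓ ^ 2 * SA + 6 * (η ^ 2 * ℓ ^ 2) * SD + 3 * SE := by
      have := mul_le_mul_of_nonneg_left hSb (by positivity : (0:ℝ) ≤ 3 * ℓ ^ 2)
      nlinarith
    have h1 : 6 * (η ^ 2 * ℓ ^ 2) * SD ≤ 6 * (1 / 48) * SD := by
      have := mul_le_mul_of_nonneg_right h48 hSDnn
      nlinarith
    have hSD2 : SD ≤ (48 / 7) * ℓ ^ 2 * SA + (24 / 7) * SE := by linarith
    have h2 : η ^ 2 / 2 * SD ≤ η ^ 2 / 2 * ((48 / 7) * ℓ ^ 2 * SA + (24 / 7) * SE) :=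
      mul_le_mul_of_nonneg_left hSD2 (by positivity)
    have h3 : η ^ 2 * ℓ ^ 2 * SA ≤ (1 / 48) * SA := by
      have := mul_le_mul_of_nonneg_right h48 hSAnn
      nlinarith
    have h4 : η ^ 2 / 2 * ((24 / 7) * SE) ≤ 3 * η ^ 2 * SE := by nlinarith
    nlinarith
  -- summed inequality
  have hsum1 : η * (∑ i ∈ Finset.range (T' + 1), ⟪G (i + 1), z (i + 1) - w⟫) ≤
      1 / 2 * ‖w - z 0‖ ^ 2 + 3 * η ^ 2 * SE := by
    have h := Finset.sum_le_sum hC1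
    rw [← Finset.mul_sum] at h
    have htel : (∑ i ∈ Finset.range (T' + 1),
        (1 / 2 * ‖w - zt i‖ ^ 2 - 1 / 2 * ‖w - zt (i + 1)‖ ^ 2)) =
        1 / 2 * ‖w - zt 0‖ ^ 2 - 1 / 2 * ‖w - zt (T' + 1)‖ ^ 2 :=
      Finset.sum_range_sub' (fun i => 1 / 2 * ‖w - zt i‖ ^ 2) (T' + 1)
    have hsplit : (∑ i ∈ Finset.range (T' + 1),
        ((1 / 2 * ‖w - zt i‖ ^ 2 - 1 / 2 * ‖w - zt (i + 1)‖ ^ 2) +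
          (η ^ 2 / 2 * ‖G (i + 1) - G i‖ ^ 2 - 1 / 2 * ‖z (i + 1) - zt i‖ ^ 2))) =
        (1 / 2 * ‖w - zt 0‖ ^ 2 - 1 / 2 * ‖w - zt (T' + 1)‖ ^ 2) +
          (η ^ 2 / 2 * SD - 1 / 2 * SA) := by
      rw [Finset.sum_add_distrib, htel, Finset.sum_sub_distrib, ← Finset.mul_sum,
        ← Finset.mul_sum]
    rw [hsplit] at h
    have hnn : 0 ≤ 1 / 2 * ‖w - zt (T' + 1)‖ ^ 2 := by positivity
    rw [hzt0] at h
    linarith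
  -- reindex goal sums
  have himg : Finset.Icc 1 (T' + 1) = Finset.image (fun i => i + 1) (Finset.range (T' + 1)) := by
    ext t
    simp only [Finset.mem_Icc, Finset.mem_image, Finset.mem_range]
    constructor
    · intro ⟨h1, h2⟩; exact ⟨t - 1, by omega, by omega⟩
    · rintro ⟨i, hi, rfl⟩; omega
  have hinj : ∀ x ∈ Finset.range (T' + 1), ∀ y ∈ Finset.range (T' + 1),
      x + 1 = y + 1 → x = y := by intros x _ y _ h; omega
  have hre1 : (∑ t ∈ Finset.Icc 1 (T' + 1), ⟪G t, z t - w⟫) =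
      ∑ i ∈ Finset.range (T' + 1), ⟪G (i + 1), z (i + 1) - w⟫ := by
    rw [himg, Finset.sum_image hinj]
  have hre2 : (∑ t ∈ Finset.Icc 1 (T' + 1),
      (‖F (z t) - G t‖ ^ 2 + ‖F (z (t - 1)) - G (t - 1)‖ ^ 2)) = SE := by
    rw [hSEdef, himg, Finset.sum_image hinj]
    apply Finset.sum_congr rfl
    intro i hi
    simp
  rw [hre1, hre2]
  -- final arithmetic
  set X := ∑ i ∈ Finset.range (T' + 1), ⟪G (i + 1), z (i + 1) - w⟫ with hXdef
  have hηT : (0:ℝ) < η * ((T' + 1 : ℕ) : ℝ) := by positivity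
  calc (1 / ((T' + 1 : ℕ) : ℝ)) * X = (η * X) / (η * ((T' + 1 : ℕ) : ℝ)) := by
        field_simp
      _ ≤ (1 / 2 * ‖w - z 0‖ ^ 2 + 3 * η ^ 2 * SE) / (η * ((T' + 1 : ℕ) : ℝ)) :=
        div_le_div_of_nonneg_right hsum1 hηT.le
      _ = ‖w - z 0‖ ^ 2 / (2 * η * ((T' + 1 : ℕ) : ℝ)) +
          3 * η / ((T' + 1 : ℕ) : ℝ) * SE := by
        field_simp
end

section
/- Let Y ⊆ ℝ^{d'} be a nonempty closed convex set and let f : ℝ^d × Y → ℝ be such that for every x ∈ ℝ^d the function y ↦ f(x,y) is μ_y-strongly concave on Y (μ_y > 0) and attains its maximum at a point ŷ(x) ∈ Y. Suppose (x_*, y_*) ∈ ℝ^d × Y is a saddle point of f, and let P(x) = max_{y∈Y} f(x,y) and P_* = P(x_*). Then for every x ∈ ℝ^d and every y ∈ Y: (i) ‖ŷ(x) − y_*‖² ≤ (2/μ_y)(P(x) − P_*); (ii) ‖y − y_*‖² ≤ (4/μ_y)(P(x) − f(x,y)) + (4/μ_y)(P(x) − P_*). -/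
open Filter Topology

/-!
Strong concavity of `f x` gives quadratic decay away from its maximizer:
`(μ/2)‖ŷ(x) − y‖² ≤ P(x) − f(x, y)`. At `y = y_*` the saddle inequalities give
`P_* = f(x_*, ŷ(x_*)) ≤ f(x_*, y_*) ≤ f(x, y_*)`, which is (i); (ii) follows from
`‖y − y_*‖² ≤ 2‖ŷ(x) − y‖² + 2‖ŷ(x) − y_*‖²`.
-/

lemma StrongConcaveOn.sq_norm_sub_le_sub_of_isMaxOn {E : Type*} [NormedAddCommGroup E]
    [InnerProductSpace ℝ E] {s : Set E} {m : ℝ} {g : E → ℝ} (hg : StrongConcaveOn s m g)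
    {a b : E} (ha : a ∈ s) (hmax : IsMaxOn g s a) (hb : b ∈ s) :
    m / 2 * ‖a - b‖ ^ 2 ≤ g a - g b := by
  -- Compare `g a` with `g` at `(1 - t) • a + t • b`, divide by `t`, and let `t → 0⁺`.
  have hstep : ∀ t ∈ Set.Ioo (0 : ℝ) 1, (1 - t) * (m / 2 * ‖a - b‖ ^ 2) ≤ g a - g b := by
    rintro t ⟨ht0, ht1⟩
    have hconc := hg.2 ha hb (sub_nonneg.2 ht1.le) ht0.le (sub_add_cancel 1 t)
    have hle : g ((1 - t) • a + t • b) ≤ g a :=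
      isMaxOn_iff.1 hmax _ (hg.1 ha hb (sub_nonneg.2 ht1.le) ht0.le (sub_add_cancel 1 t))
    simp only [smul_eq_mul] at hconc
    refine le_of_mul_le_mul_left ?_ ht0
    linarith
  have hlim : Tendsto (fun t : ℝ => (1 - t) * (m / 2 * ‖a - b‖ ^ 2)) (𝓝[>] 0)
      (𝓝 (m / 2 * ‖a - b‖ ^ 2)) := by
    have : Tendsto (fun t : ℝ => (1 - t) * (m / 2 * ‖a - b‖ ^ 2)) (𝓝 0)
        (𝓝 ((1 - 0) * (m / 2 * ‖a - b‖ ^ 2))) :=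
      ((continuous_const.sub continuous_id).mul continuous_const).tendsto 0
    simpa using this.mono_left nhdsWithin_le_nhds
  exact le_of_tendsto hlim (eventually_of_mem (Ioo_mem_nhdsGT zero_lt_one) hstep)

theorem stmt16_general {d d' : ℕ}
    (Y : Set (EuclideanSpace ℝ (Fin d')))
    (f : EuclideanSpace ℝ (Fin d) → EuclideanSpace ℝ (Fin d') → ℝ)
    (μy : ℝ) (hμy : 0 < μy)
    (hsc : ∀ x, ConcaveOn ℝ Y fun y => f x y + μy / 2 * ‖y‖ ^ 2)
    (yhat : EuclideanSpace ℝ (Fin d) → EuclideanSpace ℝ (Fin d'))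
    (hyhatmem : ∀ x, yhat x ∈ Y)
    (hyhatmax : ∀ x, ∀ y ∈ Y, f x y ≤ f x (yhat x))
    (xs : EuclideanSpace ℝ (Fin d)) (ys : EuclideanSpace ℝ (Fin d')) (hys : ys ∈ Y)
    (hsaddle : ∀ x : EuclideanSpace ℝ (Fin d), ∀ y ∈ Y, f xs y ≤ f xs ys ∧ f xs ys ≤ f x ys)
    (P : EuclideanSpace ℝ (Fin d) → ℝ)
    (hP : ∀ x, P x = f x (yhat x)) :
    ∀ x : EuclideanSpace ℝ (Fin d), ∀ y ∈ Y,
      ‖yhat x - ys‖ ^ 2 ≤ 2 / μy * (P x - P xs) ∧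
      ‖y - ys‖ ^ 2 ≤ 4 / μy * (P x - f x y) + 4 / μy * (P x - P xs) := by
  intro x y hy
  have hgrowth : ∀ z ∈ Y, μy / 2 * ‖yhat x - z‖ ^ 2 ≤ P x - f x z := fun z hz =>
    hP x ▸ (strongConcaveOn_iff_convex.2 (hsc x)).sq_norm_sub_le_sub_of_isMaxOn
      (hyhatmem x) (isMaxOn_iff.2 (hyhatmax x)) hz
  have hPxs : P xs ≤ f x ys := calc
    P xs = f xs (yhat xs) := hP xs
    _ ≤ f xs ys := (hsaddle x (yhat xs) (hyhatmem xs)).1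
    _ ≤ f x ys := (hsaddle x ys hys).2
  have hyhat : μy / 2 * ‖yhat x - ys‖ ^ 2 ≤ P x - P xs := (hgrowth ys hys).trans (by linarith)
  have hsplit : ‖y - ys‖ ^ 2 ≤ 2 * (‖yhat x - y‖ ^ 2 + ‖yhat x - ys‖ ^ 2) := calc
    ‖y - ys‖ ^ 2 ≤ (‖yhat x - y‖ + ‖yhat x - ys‖) ^ 2 := by
      gcongr
      simpa only [dist_eq_norm] using dist_triangle_left y ys (yhat x)
    _ ≤ _ := add_sq_le
  constructor
  · rw [div_mul_eq_mul_div, le_div_iff₀ hμy]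
    linarith
  · rw [← mul_add, div_mul_eq_mul_div, le_div_iff₀ hμy]
    nlinarith [hgrowth y hy]

/-- If `f(x,·)` is μy-strongly concave with maximizer `ŷ(x)` and `(x_*, y_*)` is a saddle point,
then (i) `‖ŷ(x) − y_*‖² ≤ (2/μy)(P(x) − P_*)` and
(ii) `‖y − y_*‖² ≤ (4/μy)(P(x) − f(x,y)) + (4/μy)(P(x) − P_*)`. -/
theorem stmt16 {d d' : ℕ}
    (Y : Set (EuclideanSpace ℝ (Fin d')))
    (hYne : Y.Nonempty) (hYcl : IsClosed Y) (hYcv : Convex ℝ Y)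
    (f : EuclideanSpace ℝ (Fin d) → EuclideanSpace ℝ (Fin d') → ℝ)
    (μy : ℝ) (hμy : 0 < μy)
    (hsc : ∀ x, ConcaveOn ℝ Y fun y => f x y + μy / 2 * ‖y‖ ^ 2)
    (yhat : EuclideanSpace ℝ (Fin d) → EuclideanSpace ℝ (Fin d'))
    (hyhatmem : ∀ x, yhat x ∈ Y)
    (hyhatmax : ∀ x, ∀ y ∈ Y, f x y ≤ f x (yhat x))
    (xs : EuclideanSpace ℝ (Fin d)) (ys : EuclideanSpace ℝ (Fin d')) (hys : ys ∈ Y)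
    (hsaddle : ∀ x : EuclideanSpace ℝ (Fin d), ∀ y ∈ Y, f xs y ≤ f xs ys ∧ f xs ys ≤ f x ys)
    (P : EuclideanSpace ℝ (Fin d) → ℝ)
    (hP : ∀ x, P x = f x (yhat x)) :
    ∀ x : EuclideanSpace ℝ (Fin d), ∀ y ∈ Y,
      ‖yhat x - ys‖ ^ 2 ≤ 2 / μy * (P x - P xs) ∧
      ‖y - ys‖ ^ 2 ≤ 4 / μy * (P x - f x y) + 4 / μy * (P x - P xs) :=
  stmt16_general Y f μy hμy hsc yhat hyhatmem hyhatmax xs ys hys hsaddle P hP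
end

section
/- Let δ > 0, η > 0, let Z ⊆ ℝ^n be a nonempty closed convex set, z₀ ∈ Z, and ζ₁, ..., ζ_T ∈ ℝ^n. For t = 1, ..., T define s_t ∈ ℝ^n by s_{t,i} = sqrt(Σ_{τ=1}^{t} ζ_{τ,i}²), let H_t be the diagonal matrix with entries H_{t,ii} = δ + s_{t,i}, let H₀ = δ·I, and let ψ_t(u) = (1/2)⟨u − z₀, H_t(u − z₀)⟩ for t = 0, 1, ..., T. Define the dual-averaging (AdaGrad) iterates u_{t+1} = argmin_{u∈Z} (η⟨Σ_{τ=1}^{t} ζ_τ, u⟩ + ψ_t(u)) for t = 0, 1, ..., T−1 (so u₁ = z₀). Then for every u ∈ Z: Σ_{t=1}^{T} ⟨ζ_t, u_t − u⟩ ≤ (1/η)·ψ_T(u) + (η/2)·Σ_{t=1}^{T} Σ_{i=1}^{n} ζ_{t,i}²/(H_{t−1,ii}). -/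
/-!
Write `Φ_k(v) = η⟪ζ₁ + ⋯ + ζ_k, v⟫ + ψ_k(v)`, so that `u_{k+1}` minimizes `Φ_k` on `Z`. Since `ψ_k`
is quadratic with Hessian `H_k`, minimality over the convex set `Z` gives the growth bound
`Φ_k(w) ≥ Φ_k(u_{k+1}) + ½‖w - u_{k+1}‖²_{H_k}`, and since `H_k ≤ H_{k+1}` we also have
`Φ_{k+1}(w) ≥ Φ_k(w) + η⟪ζ_{k+1}, w⟫`. Fenchel–Young trades the quadratic gain against
`η⟪ζ_{k+1}, w - u_{k+1}⟫` at the price `(η²/2)‖ζ_{k+1}‖²_{H_k⁻¹}`, so by induction on `k`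
(a "be-the-leader" argument)
`η Σ_{s ≤ T} ⟪ζ_s, u_s⟫ - (η²/2) Σ_{s ≤ T} ‖ζ_s‖²_{H_{s-1}⁻¹} ≤ Φ_T(w)` for every `w ∈ Z`;
dividing by `η` gives the regret bound.
-/

open scoped RealInnerProductSpace
open Finset Filter Topology

lemma nonneg_of_forall_mul_add_sq_mul_nonneg {b q : ℝ}
    (h : ∀ t : ℝ, 0 < t → t ≤ 1 → 0 ≤ t * b + t ^ 2 * q) : 0 ≤ b := by
  have hlim : Tendsto (fun t : ℝ => b + t * q) (𝓝[>] 0) (𝓝 b) := by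
    simpa using ((by fun_prop : Continuous fun t : ℝ => b + t * q).tendsto 0).mono_left
      nhdsWithin_le_nhds
  refine ge_of_tendsto hlim ?_
  filter_upwards [Ioc_mem_nhdsGT one_pos] with t ⟨ht0, ht1⟩
  nlinarith [h t ht0 ht1]

lemma IsMinOn.add_le_of_eq_quadratic {E : Type*} [AddCommGroup E] [Module ℝ E] {F : E → ℝ}
    {Z : Set E} {x w : E} (hmin : IsMinOn F Z x) (hZ : Convex ℝ Z) (hx : x ∈ Z) (hw : w ∈ Z)
    {b q : ℝ} (hF : ∀ t : ℝ, F (x + t • (w - x)) = F x + t * b + t ^ 2 * q) :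
    F x + q ≤ F w := by
  have hb : 0 ≤ b := nonneg_of_forall_mul_add_sq_mul_nonneg fun t ht0 ht1 => by
    have := isMinOn_iff.mp hmin _ (hZ.add_smul_sub_mem hx hw ⟨ht0.le, ht1⟩)
    rw [hF] at this
    linarith
  have h1 := hF 1
  rw [one_smul, add_sub_cancel] at h1
  linarith

lemma adaGrad_pos {ι : Type*} {δ : ℝ} (hδ : 0 < δ) {ζ : ℕ → EuclideanSpace ℝ ι} {H : ℕ → ι → ℝ}
    (hH : ∀ t i, H t i = δ + √(∑ τ ∈ Icc 1 t, ζ τ i ^ 2)) (t : ℕ) (i : ι) : 0 < H t i := by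
  rw [hH]
  positivity

lemma adaGrad_monotone {ι : Type*} {δ : ℝ} {ζ : ℕ → EuclideanSpace ℝ ι} {H : ℕ → ι → ℝ}
    (hH : ∀ t i, H t i = δ + √(∑ τ ∈ Icc 1 t, ζ τ i ^ 2)) : Monotone H := by
  intro s t hst i
  rw [hH, hH]
  gcongr

variable {ι : Type*} [Fintype ι]

lemma real_inner_eq_sum_mul (a d : EuclideanSpace ℝ ι) : ⟪a, d⟫ = ∑ i, a i * d i := by
  simp [PiLp.inner_apply, mul_comm]

lemma neg_sum_sq_div_le_inner_add_sum_mul_sq {h : ι → ℝ} (hh : ∀ i, 0 < h i) (η : ℝ)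
    (a d : EuclideanSpace ℝ ι) :
    -(η ^ 2 / 2 * ∑ i, a i ^ 2 / h i) ≤ η * ⟪a, d⟫ + 1 / 2 * ∑ i, h i * d i ^ 2 := by
  have key : ∀ i, -(η ^ 2 / 2 * (a i ^ 2 / h i)) ≤ η * (a i * d i) + 1 / 2 * (h i * d i ^ 2) := by
    intro i
    -- Fenchel–Young for the dual norms `‖·‖_h`, `‖·‖_{h⁻¹}`, completing the square
    have hsq : 0 ≤ (η * a i + h i * d i) ^ 2 / (2 * h i) := by have := hh i; positivity
    have : (η * a i + h i * d i) ^ 2 / (2 * h i) =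
        η ^ 2 / 2 * (a i ^ 2 / h i) + η * (a i * d i) + 1 / 2 * (h i * d i ^ 2) := by
      field_simp [(hh i).ne']
      ring
    linarith
  simpa only [real_inner_eq_sum_mul, mul_sum, ← sum_neg_distrib, ← sum_add_distrib] using
    sum_le_sum fun i _ => key i

noncomputable def dualAvgObjective (η : ℝ) (g z₀ : EuclideanSpace ℝ ι) (h : ι → ℝ)
    (v : EuclideanSpace ℝ ι) : ℝ :=
  η * ⟪g, v⟫ + 1 / 2 * ∑ i, h i * (v i - z₀ i) ^ 2

lemma dualAvgObjective_add_smul (η : ℝ) (g z₀ : EuclideanSpace ℝ ι) (h : ι → ℝ)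
    (x d : EuclideanSpace ℝ ι) (t : ℝ) :
    dualAvgObjective η g z₀ h (x + t • d) = dualAvgObjective η g z₀ h x +
      t * (η * ⟪g, d⟫ + ∑ i, h i * (x i - z₀ i) * d i) + t ^ 2 * (1 / 2 * ∑ i, h i * d i ^ 2) := by
  have hquad : ∑ i, h i * (x i + t * d i - z₀ i) ^ 2 = ∑ i, h i * (x i - z₀ i) ^ 2 +
      2 * t * ∑ i, h i * (x i - z₀ i) * d i + t ^ 2 * ∑ i, h i * d i ^ 2 := by
    simp only [mul_sum, ← sum_add_distrib]
    exact sum_congr rfl fun i _ => by ring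
  simp only [dualAvgObjective, inner_add_right, inner_smul_right, PiLp.add_apply,
    PiLp.smul_apply, smul_eq_mul, hquad]
  ring

lemma dualAvgObjective_add_le_of_isMinOn {Z : Set (EuclideanSpace ℝ ι)} (hZ : Convex ℝ Z)
    {η : ℝ} {g z₀ x w : EuclideanSpace ℝ ι} {h : ι → ℝ} (hx : x ∈ Z) (hw : w ∈ Z)
    (hmin : IsMinOn (dualAvgObjective η g z₀ h) Z x) :
    dualAvgObjective η g z₀ h x + 1 / 2 * ∑ i, h i * (w i - x i) ^ 2 ≤
      dualAvgObjective η g z₀ h w := by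
  simpa using hmin.add_le_of_eq_quadratic hZ hx hw
    (dualAvgObjective_add_smul η g z₀ h x (w - x))

lemma dualAvgObjective_add_inner_le {η : ℝ} (g a z₀ : EuclideanSpace ℝ ι) {h h' : ι → ℝ}
    (hh : h ≤ h') (w : EuclideanSpace ℝ ι) :
    dualAvgObjective η g z₀ h w + η * ⟪a, w⟫ ≤ dualAvgObjective η (g + a) z₀ h' w := by
  have : ∑ i, h i * (w i - z₀ i) ^ 2 ≤ ∑ i, h' i * (w i - z₀ i) ^ 2 :=
    sum_le_sum fun i _ => mul_le_mul_of_nonneg_right (hh i) (sq_nonneg _)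
  simp only [dualAvgObjective, inner_add_left]
  linarith

theorem dualAveraging_sum_le_dualAvgObjective {Z : Set (EuclideanSpace ℝ ι)} (hZ : Convex ℝ Z)
    {η : ℝ} {z₀ : EuclideanSpace ℝ ι} {ζ u : ℕ → EuclideanSpace ℝ ι} {H : ℕ → ι → ℝ}
    (hpos : ∀ t i, 0 < H t i) (hmono : Monotone H) {T : ℕ}
    (hu : ∀ t ∈ Icc 1 T, u t ∈ Z ∧
      IsMinOn (dualAvgObjective η (∑ τ ∈ Icc 1 (t - 1), ζ τ) z₀ (H (t - 1))) Z (u t)) :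
    ∀ k ≤ T, ∀ w ∈ Z, ∑ s ∈ Icc 1 k, (η * ⟪ζ s, u s⟫ - η ^ 2 / 2 * ∑ i, ζ s i ^ 2 / H (s - 1) i) ≤
      dualAvgObjective η (∑ τ ∈ Icc 1 k, ζ τ) z₀ (H k) w := by
  intro k
  induction k with
  | zero =>
    intro _ w _
    have hreg : 0 ≤ ∑ i, H 0 i * (w i - z₀ i) ^ 2 :=
      sum_nonneg fun i _ => mul_nonneg (hpos 0 i).le (sq_nonneg _)
    simpa [dualAvgObjective] using hreg
  | succ k ih =>
    intro hk w hw
    obtain ⟨hZk, hmin⟩ := hu (k + 1) (mem_Icc.mpr ⟨le_add_self, hk⟩)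
    rw [Nat.add_sub_cancel] at hmin
    have hgrowth := dualAvgObjective_add_le_of_isMinOn hZ hZk hw hmin
    have hyoung := neg_sum_sq_div_le_inner_add_sum_mul_sq (hpos k) η (ζ (k + 1)) (w - u (k + 1))
    have hmon := dualAvgObjective_add_inner_le (η := η) (∑ τ ∈ Icc 1 k, ζ τ) (ζ (k + 1)) z₀
      (hmono k.le_succ) w
    have hlead := ih (by omega) (u (k + 1)) hZk
    rw [sum_Icc_succ_top (by omega), sum_Icc_succ_top (by omega), Nat.add_sub_cancel]
    simp only [inner_sub_right, PiLp.sub_apply] at hyoung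
    linarith

theorem stmt19_general {n : ℕ} (δ η : ℝ) (hδ : 0 < δ) (hη : 0 < η)
    (Z : Set (EuclideanSpace ℝ (Fin n)))
    (hZcv : Convex ℝ Z)
    (z₀ : EuclideanSpace ℝ (Fin n))
    (T : ℕ) (ζ : ℕ → EuclideanSpace ℝ (Fin n))
    (H : ℕ → Fin n → ℝ) (ψ : ℕ → EuclideanSpace ℝ (Fin n) → ℝ)
    (hH : ∀ t, ∀ i, H t i = δ + Real.sqrt (∑ τ ∈ Finset.Icc 1 t, (ζ τ i) ^ 2))
    (hψ : ∀ t u, ψ t u = 1 / 2 * ∑ i, H t i * (u i - z₀ i) ^ 2)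
    (u : ℕ → EuclideanSpace ℝ (Fin n))
    (hu : ∀ t ∈ Finset.Icc 1 T, u t ∈ Z ∧ ∀ w ∈ Z,
      η * ⟪∑ τ ∈ Finset.Icc 1 (t - 1), ζ τ, u t⟫ + ψ (t - 1) (u t) ≤
        η * ⟪∑ τ ∈ Finset.Icc 1 (t - 1), ζ τ, w⟫ + ψ (t - 1) w) :
    ∀ w ∈ Z, ∑ t ∈ Finset.Icc 1 T, ⟪ζ t, u t - w⟫ ≤
      1 / η * ψ T w + η / 2 * ∑ t ∈ Finset.Icc 1 T, ∑ i, (ζ t i) ^ 2 / H (t - 1) i := by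
  intro w hw
  have hobj : ∀ t g v, η * ⟪g, v⟫ + ψ t v = dualAvgObjective η g z₀ (H t) v := by
    intro t g v
    rw [hψ]
    rfl
  have hbound := dualAveraging_sum_le_dualAvgObjective hZcv (adaGrad_pos hδ hH)
    (adaGrad_monotone hH) (fun t ht => ⟨(hu t ht).1, isMinOn_iff.mpr fun v hv => by
      simpa only [hobj] using (hu t ht).2 v hv⟩) T le_rfl w hw
  rw [← hobj, sum_sub_distrib, ← mul_sum, ← mul_sum] at hbound
  have hscaled : η * ∑ t ∈ Icc 1 T, ⟪ζ t, u t - w⟫ ≤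
      η * (1 / η * ψ T w + η / 2 * ∑ t ∈ Icc 1 T, ∑ i, ζ t i ^ 2 / H (t - 1) i) := by
    simp only [inner_sub_right, sum_sub_distrib, ← sum_inner]
    field_simp
    linear_combination 2 * hbound
  exact le_of_mul_le_mul_left hscaled hη

/-- Regret bound for the adaptive dual-averaging (AdaGrad) scheme: with diagonal preconditioners
`H_t = δ + sqrt(Σ_{τ≤t} ζ_{τ,i}²)` and `ψ_t(u) = ½⟨u − z₀, H_t(u − z₀)⟩`, the iterates
`u_{t+1} = argmin_{u∈Z} (η⟨Σ_{τ≤t} ζ_τ, u⟩ + ψ_t(u))` satisfy, for every `u ∈ Z`,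
`Σ_{t=1}^T ⟨ζ_t, u_t − u⟩ ≤ (1/η)ψ_T(u) + (η/2) Σ_{t=1}^T Σ_i ζ_{t,i}²/H_{t−1,ii}`. -/
theorem stmt19 {n : ℕ} (δ η : ℝ) (hδ : 0 < δ) (hη : 0 < η)
    (Z : Set (EuclideanSpace ℝ (Fin n)))
    (hZne : Z.Nonempty) (hZcl : IsClosed Z) (hZcv : Convex ℝ Z)
    (z₀ : EuclideanSpace ℝ (Fin n)) (hz₀ : z₀ ∈ Z)
    (T : ℕ) (ζ : ℕ → EuclideanSpace ℝ (Fin n))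
    (H : ℕ → Fin n → ℝ) (ψ : ℕ → EuclideanSpace ℝ (Fin n) → ℝ)
    (hH : ∀ t, ∀ i, H t i = δ + Real.sqrt (∑ τ ∈ Finset.Icc 1 t, (ζ τ i) ^ 2))
    (hψ : ∀ t u, ψ t u = 1 / 2 * ∑ i, H t i * (u i - z₀ i) ^ 2)
    (u : ℕ → EuclideanSpace ℝ (Fin n))
    (hu : ∀ t ∈ Finset.Icc 1 T, u t ∈ Z ∧ ∀ w ∈ Z,
      η * ⟪∑ τ ∈ Finset.Icc 1 (t - 1), ζ τ, u t⟫ + ψ (t - 1) (u t) ≤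
        η * ⟪∑ τ ∈ Finset.Icc 1 (t - 1), ζ τ, w⟫ + ψ (t - 1) w) :
    ∀ w ∈ Z, ∑ t ∈ Finset.Icc 1 T, ⟪ζ t, u t - w⟫ ≤
      1 / η * ψ T w + η / 2 * ∑ t ∈ Finset.Icc 1 T, ∑ i, (ζ t i) ^ 2 / H (t - 1) i :=
  stmt19_general δ η hδ hη Z hZcv z₀ T ζ H ψ hH hψ u hu
end
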